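/- arXiv:1812.10079 — 7 statements merged into one kernel-verified Lean document; each statement's English description precedes it below -/
import Mathlib

section
/- Let X be a reflexive Banach space with property (μ^s) such that the closed unit ball of X* is weak*-sequentially compact. Then X* has the Banach-Saks property. -/
open Filter Topology MeasureTheory Pointwise

noncomputable section

/-- A subset of a real normed space is *weakly compact* if it is compact in the weak topology. -/
def WeaklyCompact {X : Type*} [NormedAddCommGroup X] [NormedSpace ℝ X] (W : Set X) : Prop :=
  IsCompact (toWeakSpace ℝ X '' W)

/-- A sequence in the dual is weak*-null. -/
def WeakStarNull {X : Type*} [NormedAddCommGroup X] [NormedSpace ℝ X]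
    (f : ℕ → StrongDual ℝ X) : Prop :=
  ∀ x : X, Tendsto (fun n => f n x) atTop (𝓝 0)

/-- Convergence to `0` in the Mackey topology `μ(X*,X)`: uniform convergence to `0`
on every weakly compact subset of `X`. -/
def MackeyNull {X : Type*} [NormedAddCommGroup X] [NormedSpace ℝ X]
    (f : ℕ → StrongDual ℝ X) : Prop :=
  ∀ W : Set X, WeaklyCompact W → TendstoUniformlyOn (fun n x => f n x) 0 atTop W

/-- The sequence of Cesàro (arithmetic) means of `f` converges to `0` in the Mackey
topology `μ(X*,X)`. -/
def CesaroMackeyNull {X : Type*} [NormedAddCommGroup X] [NormedSpace ℝ X]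
    (f : ℕ → StrongDual ℝ X) : Prop :=
  ∀ W : Set X, WeaklyCompact W →
    TendstoUniformlyOn (fun N : ℕ => fun x => (N : ℝ)⁻¹ • ∑ n ∈ Finset.range N, f n x) 0 atTop W

/-- Property (μ^s): every weak*-null sequence in `X*` admits a subsequence all of whose
further subsequences are Cesàro convergent to `0` with respect to the Mackey topology. -/
def PropMuS (X : Type*) [NormedAddCommGroup X] [NormedSpace ℝ X] : Prop :=
  ∀ f : ℕ → StrongDual ℝ X, WeakStarNull f →
    ∃ φ : ℕ → ℕ, StrictMono φ ∧ ∀ ψ : ℕ → ℕ, StrictMono ψ →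
      CesaroMackeyNull (fun k => f (φ (ψ k)))

/-- The Banach-Saks property: every bounded sequence admits a subsequence whose
arithmetic means converge in norm. -/
def BanachSaksSpace (X : Type*) [NormedAddCommGroup X] [NormedSpace ℝ X] : Prop :=
  ∀ u : ℕ → X, Bornology.IsBounded (Set.range u) →
    ∃ φ : ℕ → ℕ, StrictMono φ ∧ ∃ y : X,
      Tendsto (fun N : ℕ => (N : ℝ)⁻¹ • ∑ k ∈ Finset.range N, u (φ k)) atTop (𝓝 y)

/-!
Extract from a bounded sequence `u` in `X*` a weak*-convergent subsequence `u ∘ φ₁ → g`.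
Property (μ^s) applied to the weak*-null sequence `u ∘ φ₁ - g` yields a further subsequence
whose Cesàro means tend to `0` uniformly on every weakly compact set. By reflexivity the unit
ball of `X` is weakly compact (Banach–Alaoglu in `X**`), and uniform convergence on the unit
ball is norm convergence in `X*`; hence the Cesàro means of `u ∘ φ₁ ∘ φ₂` converge to `g`.
-/

open Metric NormedSpace

theorem ContinuousLinearMap.tendsto_nhds_zero_of_tendstoUniformlyOn_closedBall
    {𝕜 E F ι : Type*} [NontriviallyNormedField 𝕜] [NormedAlgebra ℝ 𝕜]
    [SeminormedAddCommGroup E] [NormedSpace 𝕜 E] [SeminormedAddCommGroup F] [NormedSpace 𝕜 F]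
    {T : ι → E →L[𝕜] F} {l : Filter ι}
    (hT : TendstoUniformlyOn (fun i x => T i x) 0 l (closedBall 0 1)) :
    Tendsto T l (𝓝 0) := by
  rw [NormedAddGroup.tendsto_nhds_zero]
  intro ε hε
  filter_upwards [Metric.tendstoUniformlyOn_iff.1 hT (ε / 2) (half_pos hε)] with i hi
  have hbound : ‖T i‖ ≤ ε / 2 := (T i).opNorm_le_of_unit_norm (half_pos hε).le fun x hx => by
    simpa using (hi x (mem_closedBall_zero_iff.2 hx.le)).le
  linarith

theorem tendsto_cesaro_of_tendsto_cesaro_sub {E : Type*} [AddCommGroup E] [Module ℝ E]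
    [TopologicalSpace E] [ContinuousAdd E] {v : ℕ → E} {g : E}
    (h : Tendsto (fun N : ℕ => (N : ℝ)⁻¹ • ∑ k ∈ Finset.range N, (v k - g)) atTop (𝓝 0)) :
    Tendsto (fun N : ℕ => (N : ℝ)⁻¹ • ∑ k ∈ Finset.range N, v k) atTop (𝓝 g) := by
  refine (zero_add g ▸ h.add_const g).congr' ?_
  filter_upwards [eventually_ne_atTop 0] with N hN
  rw [Finset.sum_sub_distrib, Finset.sum_const, Finset.card_range, smul_sub,
    ← Nat.cast_smul_eq_nsmul ℝ, smul_smul, inv_mul_cancel₀ (Nat.cast_ne_zero.2 hN), one_smul,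
    sub_add_cancel]

def WeakStarSeqCompactUnitBall (X : Type*) [NormedAddCommGroup X] [NormedSpace ℝ X] : Prop :=
  ∀ f : ℕ → StrongDual ℝ X, (∀ n, ‖f n‖ ≤ 1) →
    ∃ φ : ℕ → ℕ, StrictMono φ ∧ ∃ g : StrongDual ℝ X,
      ∀ x : X, Tendsto (fun k => f (φ k) x) atTop (𝓝 (g x))

section

variable {X : Type*} [NormedAddCommGroup X] [NormedSpace ℝ X]

theorem WeakStarSeqCompactUnitBall.exists_subseq_tendsto (h : WeakStarSeqCompactUnitBall X)
    {u : ℕ → StrongDual ℝ X} (hu : Bornology.IsBounded (Set.range u)) :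
    ∃ φ : ℕ → ℕ, StrictMono φ ∧ ∃ g : StrongDual ℝ X,
      ∀ x : X, Tendsto (fun k => u (φ k) x) atTop (𝓝 (g x)) := by
  obtain ⟨R, hR, hu⟩ := hu.exists_pos_norm_le
  have hscaled : ∀ n, ‖R⁻¹ • u n‖ ≤ 1 := fun n => by
    rw [norm_smul, norm_inv, Real.norm_of_nonneg hR.le, inv_mul_le_one₀ hR]
    exact hu _ (Set.mem_range_self n)
  obtain ⟨φ, hφ, g, hg⟩ := h _ hscaled
  refine ⟨φ, hφ, R • g, fun x => ?_⟩
  convert (hg x).const_mul R using 2 with k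
  · simp [hR.ne']
  · simp

theorem weaklyCompact_closedBall_of_surjective_inclusionInDoubleDual
    (hrefl : Function.Surjective (inclusionInDoubleDual ℝ X)) (r : ℝ) :
    WeaklyCompact (closedBall (0 : X) r) := by
  rw [WeaklyCompact, (isEmbedding_inclusionInDoubleDualWeak ℝ X).isCompact_iff, Set.image_image]
  convert WeakDual.isCompact_closedBall (𝕜 := ℝ) (0 : StrongDual ℝ (StrongDual ℝ X)) r
  ext z
  obtain ⟨x, hx⟩ := hrefl (WeakDual.toStrongDual z)
  obtain rfl : inclusionInDoubleDualWeak ℝ X (toWeakSpace ℝ X x) = z :=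
    WeakDual.toStrongDual.injective hx
  have hinj :=
    (isEmbedding_inclusionInDoubleDualWeak ℝ X).injective.comp (toWeakSpace ℝ X).injective
  have hnorm : ‖inclusionInDoubleDual ℝ X x‖ = ‖x‖ := (inclusionInDoubleDualLi ℝ).norm_map x
  rw [Set.mem_preimage, ← hx, mem_closedBall_zero_iff, hnorm, ← mem_closedBall_zero_iff]
  exact hinj.mem_set_image

theorem CesaroMackeyNull.tendsto_cesaro_nhds_zero {f : ℕ → StrongDual ℝ X}
    (hf : CesaroMackeyNull f) (hball : WeaklyCompact (closedBall (0 : X) 1)) :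
    Tendsto (fun N : ℕ => (N : ℝ)⁻¹ • ∑ n ∈ Finset.range N, f n) atTop (𝓝 0) :=
  ContinuousLinearMap.tendsto_nhds_zero_of_tendstoUniformlyOn_closedBall <| by
    simpa only [FunLike.coe_smul, FunLike.coe_sum, Pi.smul_apply, Finset.sum_apply]
      using hf _ hball

end

theorem stmt3_general {X : Type*} [NormedAddCommGroup X] [NormedSpace ℝ X]
    (hrefl : Function.Surjective (NormedSpace.inclusionInDoubleDual ℝ X))
    (hmu : PropMuS X)
    (hseq : ∀ f : ℕ → StrongDual ℝ X, (∀ n, ‖f n‖ ≤ 1) →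
      ∃ φ : ℕ → ℕ, StrictMono φ ∧ ∃ g : StrongDual ℝ X,
        ∀ x : X, Tendsto (fun k => f (φ k) x) atTop (𝓝 (g x))) :
    BanachSaksSpace (StrongDual ℝ X) := by
  intro u hu
  obtain ⟨φ₁, hφ₁, g, hg⟩ := WeakStarSeqCompactUnitBall.exists_subseq_tendsto hseq hu
  have hnull : WeakStarNull fun n => u (φ₁ n) - g := fun x => by
    simpa using (hg x).sub_const (g x)
  obtain ⟨φ₂, hφ₂, hces⟩ := hmu _ hnull
  have hmeans := (hces id strictMono_id).tendsto_cesaro_nhds_zero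
    (weaklyCompact_closedBall_of_surjective_inclusionInDoubleDual hrefl 1)
  exact ⟨φ₁ ∘ φ₂, hφ₁.comp hφ₂, g, tendsto_cesaro_of_tendsto_cesaro_sub hmeans⟩

/-- If `X` is a reflexive Banach space with property (μ^s) whose dual unit ball is
weak*-sequentially compact, then `X*` has the Banach-Saks property. -/
theorem stmt3 {X : Type*} [NormedAddCommGroup X] [NormedSpace ℝ X] [CompleteSpace X]
    (hrefl : Function.Surjective (NormedSpace.inclusionInDoubleDual ℝ X))
    (hmu : PropMuS X)
    (hseq : ∀ f : ℕ → StrongDual ℝ X, (∀ n, ‖f n‖ ≤ 1) →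
      ∃ φ : ℕ → ℕ, StrictMono φ ∧ ∃ g : StrongDual ℝ X,
        ∀ x : X, Tendsto (fun k => f (φ k) x) atTop (𝓝 (g x))) :
    BanachSaksSpace (StrongDual ℝ X) :=
  stmt3_general hrefl hmu hseq
end
end

section
/- Let X and Y be Banach spaces and T : Y → X an operator whose adjoint T* : X* → Y* is a Banach-Saks operator. Then X has property (μ^s_{{T(B_Y)}}): every weak*-null sequence in X* admits a subsequence all of whose further subsequences are Cesàro convergent to 0 uniformly on T(B_Y). -/
open Filter Topology MeasureTheory Pointwise

noncomputable section

/-- A family `H` of subsets of `X` is strongly generated by a family `G` if for every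
`H₀ ∈ H` and `ε > 0` there is `G₀ ∈ G` with `H₀ ⊆ G₀ + ε B_X`. -/
def StronglyGeneratedBy {X : Type*} [NormedAddCommGroup X] [NormedSpace ℝ X]
    (H G : Set (Set X)) : Prop :=
  ∀ H₀ ∈ H, ∀ ε : ℝ, 0 < ε → ∃ G₀ ∈ G, H₀ ⊆ G₀ + ε • Metric.closedBall (0 : X) 1

/-- Property (μ^s_A) for a family `A` of subsets of `X`: every weak*-null sequence in `X*`
admits a subsequence all of whose further subsequences are Cesàro convergent to `0`
uniformly on each element of `A`. -/
def PropMuSFam (X : Type*) [NormedAddCommGroup X] [NormedSpace ℝ X]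
    (A : Set (Set X)) : Prop :=
  ∀ f : ℕ → StrongDual ℝ X, WeakStarNull f →
    ∃ φ : ℕ → ℕ, StrictMono φ ∧ ∀ ψ : ℕ → ℕ, StrictMono ψ → ∀ A₀ ∈ A,
      TendstoUniformlyOn
        (fun N : ℕ => fun x => (N : ℝ)⁻¹ • ∑ k ∈ Finset.range N, f (φ (ψ k)) x)
        0 atTop A₀

/-!
Put `z n = T* f n`. A weak*-null sequence `(f n)` is bounded (uniform boundedness), so by the
Banach-Saks property every subsequence of `(z n)` has a further subsequence with norm-convergent
Cesàro means, and the limit is `0` because it is computed pointwise from `f n (T y) → 0`. An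
Erdős-Magidor type uniformization then produces a subsequence all of whose subsequences have
norm-null Cesàro means; norm convergence in `Y*` is uniform convergence on `B_Y`.

For the uniformization fix `ε > 0`. Infinite Ramsey, applied to the colouring
`‖∑ i ∈ s, z i‖ ≤ ε |s|` of `n`-sets, yields an `n` and an infinite set all of whose `n`-subsets
have small sums: otherwise there are nested infinite sets, the `n`-th one having only large
`n`-sums, and a Cesàro-null subsequence of their diagonal has a small block of length `n` inside
the `n`-th set for `n` large. Along any subsequence of such a set the partial sums are at most
`ε N + O(n)`, and a diagonal over `ε = 1/(j+1)` gives the subsequence.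
-/

theorem Set.Infinite.exists_strictMono_tail_mem {M : Set ℕ} (hM : M.Infinite)
    {P : ℕ → ℕ → Set ℕ → Prop}
    (step : ∀ j a, ∀ A ⊆ M, A.Infinite → ∃ B ⊆ A, B.Infinite ∧ P j a B) :
    ∃ d : ℕ → ℕ, StrictMono d ∧ (∀ k, d k ∈ M) ∧ ∀ j, ∃ B, P j (d j) B ∧ ∀ k > j, d k ∈ B := by
  have next : ∀ j (A : {A : Set ℕ // A ⊆ M ∧ A.Infinite}),
      ∃ B : {A : Set ℕ // A ⊆ M ∧ A.Infinite},
        B.1 ⊆ A.1 ∩ Set.Ioi (sInf A.1) ∧ P j (sInf A.1) B.1 := by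
    rintro j ⟨A, hAM, hA⟩
    have hA' : (A ∩ Set.Ioi (sInf A)).Infinite := by
      simpa [Set.sdiff_eq, Set.compl_Iic] using hA.sdiff (Set.finite_Iic (sInf A))
    obtain ⟨B, hBA, hB, hP⟩ := step j (sInf A) _ (Set.inter_subset_left.trans hAM) hA'
    exact ⟨⟨B, hBA.trans (Set.inter_subset_left.trans hAM), hB⟩, hBA, hP⟩
  choose next hnext hP using next
  let A : ℕ → {A : Set ℕ // A ⊆ M ∧ A.Infinite} := fun j => Nat.rec ⟨M, subset_rfl, hM⟩ next j
  have hA_anti : Antitone fun j => (A j).1 :=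
    antitone_nat_of_succ_le fun j => (hnext j (A j)).trans Set.inter_subset_left
  have hd_mem : ∀ j, sInf (A j).1 ∈ (A j).1 := fun j => Nat.sInf_mem (A j).2.2.nonempty
  refine ⟨fun j => sInf (A j).1,
    strictMono_nat_of_lt_succ fun j => (hnext j (A j) (hd_mem (j + 1))).2,
    fun k => (A k).2.1 (hd_mem k),
    fun j => ⟨(A (j + 1)).1, hP j (A j), fun k hk => hA_anti hk (hd_mem k)⟩⟩

theorem Set.Infinite.exists_homogeneous_subset {M : Set ℕ} (hM : M.Infinite) (r : ℕ)
    (c : Finset ℕ → Prop) :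
    ∃ M' ⊆ M, M'.Infinite ∧ ∃ b : Prop, ∀ s : Finset ℕ, ↑s ⊆ M' → s.card = r → (c s ↔ b) := by
  induction r generalizing M c with
  | zero => exact ⟨M, subset_rfl, hM, c ∅, fun s _ hs => by rw [Finset.card_eq_zero.1 hs]⟩
  | succ r ih =>
    obtain ⟨a, ha, haM, hB⟩ := hM.exists_strictMono_tail_mem
      (P := fun _ x B => ∃ b : Prop, ∀ t : Finset ℕ, ↑t ⊆ B → t.card = r → (c (insert x t) ↔ b))
      fun _ x _ _ hA => ih hA _
    choose B hBb haB using hB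
    choose b hb using hBb
    obtain ⟨β, hβ⟩ := Finite.exists_infinite_fiber b
    refine ⟨a '' (b ⁻¹' {β}), Set.image_subset_iff.2 fun i _ => haM i,
      (Set.infinite_coe_iff.1 hβ).image ha.injective.injOn, β, fun s hs hcard => ?_⟩
    have hne : s.Nonempty := Finset.card_pos.1 (by omega)
    obtain ⟨i, hi, hx⟩ := hs (s.min'_mem hne)
    have hmin : a i ∈ s := hx ▸ s.min'_mem hne
    have hrest : ↑(s.erase (a i)) ⊆ B i := by
      intro y hy
      obtain ⟨hyx, hys⟩ := Finset.mem_erase.1 hy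
      obtain ⟨k, -, rfl⟩ := hs hys
      exact haB i k (ha.lt_iff_lt.1 (lt_of_le_of_ne (hx ▸ s.min'_le _ hys) (Ne.symm hyx)))
    rw [← Finset.insert_erase hmin,
      hb i _ hrest (by rw [Finset.card_erase_of_mem hmin, hcard]; rfl)]
    exact Iff.of_eq hi

section Cesaro

variable {E : Type*} [NormedAddCommGroup E] [NormedSpace ℝ E]

open Finset

def CesaroNull (u : ℕ → E) : Prop :=
  Tendsto (fun N : ℕ => (N : ℝ)⁻¹ • ∑ k ∈ range N, u k) atTop (𝓝 0)

theorem cesaroNull_of_norm_sum_le {u : ℕ → E}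
    (h : ∀ ε > 0, ∃ K, ∀ N, ‖∑ k ∈ range N, u k‖ ≤ ε * N + K) : CesaroNull u := by
  rw [CesaroNull, NormedAddGroup.tendsto_nhds_zero]
  intro ε hε
  obtain ⟨K, hK⟩ := h (ε / 2) (half_pos hε)
  filter_upwards [(tendsto_const_div_atTop_nhds_zero_nat K).eventually
    (gt_mem_nhds (half_pos hε)), eventually_gt_atTop 0] with N hKN hN
  have hN' : (0 : ℝ) < N := Nat.cast_pos.2 hN
  rw [norm_smul, norm_inv, Real.norm_natCast, inv_mul_lt_iff₀ hN']
  calc ‖∑ k ∈ range N, u k‖ ≤ ε / 2 * N + K := hK N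
    _ < N * ε := by rw [div_lt_iff₀ hN'] at hKN; linarith

theorem CesaroNull.eventually_norm_sum_Ico_le {u : ℕ → E} (h : CesaroNull u) {ε : ℝ}
    (hε : 0 < ε) : ∀ᶠ a in atTop, ‖∑ k ∈ Ico a (2 * a), u k‖ ≤ ε * a := by
  have hsum : ∀ᶠ N in atTop, ‖∑ k ∈ range N, u k‖ ≤ ε / 3 * N := by
    filter_upwards [(NormedAddGroup.tendsto_nhds_zero.1 h) (ε / 3) (by positivity)]
      with N hN
    rcases N.eq_zero_or_pos with rfl | hN0
    · simp
    have hN' : (0 : ℝ) < N := Nat.cast_pos.2 hN0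
    rw [norm_smul, norm_inv, Real.norm_natCast, inv_mul_lt_iff₀ hN'] at hN
    linarith
  obtain ⟨K, hK⟩ := eventually_atTop.1 hsum
  filter_upwards [eventually_ge_atTop K] with a ha
  have h2a := hK (2 * a) (by omega)
  rw [← sum_range_add_sum_Ico _ (by omega : a ≤ 2 * a)] at h2a
  calc ‖∑ k ∈ Ico a (2 * a), u k‖
      = ‖(∑ k ∈ range a, u k + ∑ k ∈ Ico a (2 * a), u k) - ∑ k ∈ range a, u k‖ := by
        rw [add_sub_cancel_left]
    _ ≤ ε / 3 * ↑(2 * a) + ε / 3 * a := (norm_sub_le _ _).trans (add_le_add h2a (hK a ha))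
    _ = ε * a := by push_cast; ring

end Cesaro

section Blocks

variable {E : Type*} [NormedAddCommGroup E]

open Finset

def SumsLeOn (z : ℕ → E) (ε : ℝ) (n : ℕ) (M : Set ℕ) : Prop :=
  ∀ s : Finset ℕ, ↑s ⊆ M → s.card = n → ‖∑ i ∈ s, z i‖ ≤ ε * n

theorem StrictMono.exists_finset_sum_eq_sum_Ico {ρ : ℕ → ℕ} (hρ : StrictMono ρ) {M : Set ℕ}
    {m a : ℕ} (hρM : ∀ k ≥ m, ρ k ∈ M) (ha : m ≤ a) (n : ℕ) (z : ℕ → E) :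
    ∃ s : Finset ℕ, ↑s ⊆ M ∧ s.card = n ∧ ∑ i ∈ s, z i = ∑ k ∈ Ico a (a + n), z (ρ k) := by
  refine ⟨(Ico a (a + n)).image ρ, ?_, ?_, sum_image hρ.injective.injOn⟩
  · simp only [coe_image, coe_Ico, Set.image_subset_iff]
    exact fun k hk => hρM k (ha.trans hk.1)
  · rw [card_image_of_injective _ hρ.injective, Nat.card_Ico, Nat.add_sub_cancel_left]

theorem SumsLeOn.norm_sum_range_le {z : ℕ → E} {C ε : ℝ} {n m : ℕ} {M : Set ℕ}
    (h : SumsLeOn z ε n M) (hC : ∀ i, ‖z i‖ ≤ C) (hε : 0 ≤ ε) (hn : 0 < n)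
    {ρ : ℕ → ℕ} (hρ : StrictMono ρ) (hρM : ∀ k ≥ m, ρ k ∈ M) (N : ℕ) :
    ‖∑ k ∈ range N, z (ρ k)‖ ≤ ε * N + (m + n) * C := by
  have hC0 : 0 ≤ C := (norm_nonneg _).trans (hC 0)
  induction N using Nat.strong_induction_on with
  | _ N ih =>
    by_cases hN : N < m + n
    · calc ‖∑ k ∈ range N, z (ρ k)‖ ≤ ∑ k ∈ range N, ‖z (ρ k)‖ := norm_sum_le _ _
        _ ≤ ∑ _k ∈ range N, C := sum_le_sum fun k _ => hC (ρ k)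
        _ = N * C := by simp
        _ ≤ ε * N + (m + n) * C := by
          have : (N : ℝ) ≤ m + n := by exact_mod_cast hN.le
          nlinarith [mul_nonneg hε (Nat.cast_nonneg N : (0 : ℝ) ≤ N)]
    · -- peel off the last block of length `n`, which lies in the tail
      obtain ⟨a, rfl⟩ : ∃ a, N = a + n := ⟨N - n, by omega⟩
      obtain ⟨s, hsM, hs, hsum⟩ := hρ.exists_finset_sum_eq_sum_Ico hρM (by omega : m ≤ a) n z
      rw [← sum_range_add_sum_Ico _ (Nat.le_add_right a n), ← hsum]
      calc ‖∑ k ∈ range a, z (ρ k) + ∑ i ∈ s, z i‖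
          ≤ (ε * a + (m + n) * C) + ε * n :=
            (norm_add_le _ _).trans (add_le_add (ih a (by omega)) (h s hsM hs))
        _ = ε * ↑(a + n) + (m + n) * C := by push_cast; ring

end Blocks

section ErdosMagidor

variable {E : Type*} [NormedAddCommGroup E] [NormedSpace ℝ E]

theorem exists_sumsLeOn_of_cesaroNull {z : ℕ → E}
    (hz : ∀ σ : ℕ → ℕ, StrictMono σ → ∃ τ : ℕ → ℕ, StrictMono τ ∧ CesaroNull (z ∘ σ ∘ τ))
    {ε : ℝ} (hε : 0 < ε) {M : Set ℕ} (hM : M.Infinite) :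
    ∃ M' ⊆ M, M'.Infinite ∧ ∃ n, 0 < n ∧ SumsLeOn z ε n M' := by
  by_contra! hbad
  -- Ramsey's theorem, where `hbad` rules out the colour of small sums
  have step : ∀ j (_ : ℕ), ∀ A ⊆ M, A.Infinite → ∃ B ⊆ A, B.Infinite ∧
      ∀ s : Finset ℕ, ↑s ⊆ B → s.card = j + 1 → ε * ↑(j + 1) < ‖∑ i ∈ s, z i‖ := by
    intro j _ A hAM hA
    obtain ⟨B, hBA, hB, b, hb⟩ :=
      hA.exists_homogeneous_subset (j + 1) fun s => ‖∑ i ∈ s, z i‖ ≤ ε * ↑(j + 1)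
    refine ⟨B, hBA, hB, fun s hs hcard => not_le.1 fun hle => ?_⟩
    exact hbad B (hBA.trans hAM) hB (j + 1) j.succ_pos
      fun t ht htcard => (hb t ht htcard).2 ((hb s hs hcard).1 hle)
  obtain ⟨d, hd, -, hlarge⟩ := hM.exists_strictMono_tail_mem step
  obtain ⟨τ, hτ, hces⟩ := hz d hd
  obtain ⟨a, ha, ha1⟩ := ((hces.eventually_norm_sum_Ico_le hε).and (eventually_ge_atTop 1)).exists
  obtain ⟨j, rfl⟩ : ∃ j, a = j + 1 := ⟨a - 1, by omega⟩
  obtain ⟨B, hB, htail⟩ := hlarge j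
  obtain ⟨s, hsB, hs, hsum⟩ := (hd.comp hτ).exists_finset_sum_eq_sum_Ico
    (m := j + 1) (fun k hk => htail _ (by have := hτ.le_apply (x := k); omega)) le_rfl (j + 1) z
  have hlarge_block := hB s hsB hs
  rw [hsum, ← two_mul] at hlarge_block
  exact hlarge_block.not_ge ha

theorem exists_strictMono_forall_cesaroNull {z : ℕ → E} {C : ℝ} (hC : ∀ i, ‖z i‖ ≤ C)
    (hz : ∀ σ : ℕ → ℕ, StrictMono σ → ∃ τ : ℕ → ℕ, StrictMono τ ∧ CesaroNull (z ∘ σ ∘ τ)) :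
    ∃ φ : ℕ → ℕ, StrictMono φ ∧ ∀ ψ : ℕ → ℕ, StrictMono ψ → CesaroNull (z ∘ φ ∘ ψ) := by
  obtain ⟨d, hd, -, hsmall⟩ := Set.infinite_univ.exists_strictMono_tail_mem
    (P := fun j _ B => ∃ n, 0 < n ∧ SumsLeOn z (1 / (j + 1)) n B)
    fun j _ A _ hA => exists_sumsLeOn_of_cesaroNull hz (by positivity) hA
  refine ⟨d, hd, fun ψ hψ => cesaroNull_of_norm_sum_le fun ε hε => ?_⟩
  obtain ⟨j, hj⟩ := exists_nat_one_div_lt hε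
  obtain ⟨B, ⟨n, hn, hB⟩, htail⟩ := hsmall j
  refine ⟨((j + 1 : ℕ) + n) * C, fun N => ?_⟩
  calc ‖∑ k ∈ Finset.range N, z (d (ψ k))‖ ≤ 1 / (j + 1) * N + ((j + 1 : ℕ) + n) * C :=
        hB.norm_sum_range_le hC (by positivity) hn (hd.comp hψ) (m := j + 1)
          (fun k hk => htail _ (by have := hψ.le_apply (x := k); omega)) N
    _ ≤ ε * N + ((j + 1 : ℕ) + n) * C := by gcongr

end ErdosMagidor

section Duality

variable {X Y : Type*} [NormedAddCommGroup X] [NormedSpace ℝ X]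
  [NormedAddCommGroup Y] [NormedSpace ℝ Y]

theorem WeakStarNull.isBounded_range [CompleteSpace X] {f : ℕ → StrongDual ℝ X}
    (hf : WeakStarNull f) : Bornology.IsBounded (Set.range f) := by
  obtain ⟨C, hC⟩ := banach_steinhaus fun x => by
    obtain ⟨C, hC⟩ := isBounded_iff_forall_norm_le.1 (Metric.isBounded_range_of_tendsto _ (hf x))
    exact ⟨C, fun n => hC _ ⟨n, rfl⟩⟩
  exact isBounded_iff_forall_norm_le.2 ⟨C, by rintro _ ⟨n, rfl⟩; exact hC n⟩

theorem WeakStarNull.eq_zero_of_tendsto_cesaro {u : ℕ → StrongDual ℝ X} (hu : WeakStarNull u)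
    {g : StrongDual ℝ X}
    (hg : Tendsto (fun N : ℕ => (N : ℝ)⁻¹ • ∑ k ∈ Finset.range N, u k) atTop (𝓝 g)) :
    g = 0 := by
  ext x
  refine tendsto_nhds_unique
    ((ContinuousLinearMap.apply ℝ ℝ x).continuous.tendsto g |>.comp hg) ?_
  simpa [Function.comp_def] using (hu x).cesaro_smul

theorem ContinuousLinearMap.tendstoUniformlyOn_image_closedBall (T : Y →L[ℝ] X)
    {F : ℕ → StrongDual ℝ X} (hF : Tendsto (fun N => (F N).comp T) atTop (𝓝 0)) :
    TendstoUniformlyOn (fun N x => F N x) 0 atTop (T '' Metric.closedBall 0 1) := by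
  rw [Metric.tendstoUniformlyOn_iff]
  intro ε hε
  filter_upwards [NormedAddGroup.tendsto_nhds_zero.1 hF ε hε] with N hN
  rintro _ ⟨y, hy, rfl⟩
  rw [Pi.zero_apply, dist_zero_left]
  calc ‖F N (T y)‖ = ‖(F N).comp T y‖ := rfl
    _ ≤ ‖(F N).comp T‖ * 1 := (F N).comp T |>.le_opNorm_of_le (mem_closedBall_zero_iff.1 hy)
    _ < ε := by rwa [mul_one]

end Duality

theorem stmt6_general {X Y : Type*} [NormedAddCommGroup X] [NormedSpace ℝ X] [CompleteSpace X]
    [NormedAddCommGroup Y] [NormedSpace ℝ Y]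
    (T : Y →L[ℝ] X)
    (hT : ∀ f : ℕ → StrongDual ℝ X, Bornology.IsBounded (Set.range f) →
      ∃ φ : ℕ → ℕ, StrictMono φ ∧ ∃ g : StrongDual ℝ Y,
        Tendsto (fun N : ℕ => (N : ℝ)⁻¹ • ∑ k ∈ Finset.range N, (f (φ k)).comp T)
          atTop (𝓝 g)) :
    PropMuSFam X {T '' Metric.closedBall (0 : Y) 1} := by
  intro f hf
  have hf_bdd := hf.isBounded_range
  obtain ⟨C, hC⟩ := isBounded_iff_forall_norm_le.1 hf_bdd
  have hz_bdd : ∀ n, ‖(f n).comp T‖ ≤ C * ‖T‖ := fun n =>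
    ((f n).opNorm_comp_le T).trans (by gcongr; exact hC _ ⟨n, rfl⟩)
  have hz : ∀ σ : ℕ → ℕ, StrictMono σ → ∃ τ : ℕ → ℕ, StrictMono τ ∧
      CesaroNull ((fun n => (f n).comp T) ∘ σ ∘ τ) := by
    intro σ hσ
    obtain ⟨τ, hτ, g, hg⟩ := hT (f ∘ σ) (hf_bdd.subset (Set.range_comp_subset_range σ f))
    have hg0 : g = 0 := WeakStarNull.eq_zero_of_tendsto_cesaro
      (fun y => (hf (T y)).comp (hσ.comp hτ).tendsto_atTop) hg
    subst hg0
    exact ⟨τ, hτ, hg⟩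
  obtain ⟨φ, hφ, hall⟩ := exists_strictMono_forall_cesaroNull hz_bdd hz
  refine ⟨φ, hφ, fun ψ hψ A hA => ?_⟩
  rw [Set.mem_singleton_iff.1 hA]
  have := T.tendstoUniformlyOn_image_closedBall
    (F := fun N : ℕ => (N : ℝ)⁻¹ • ∑ k ∈ Finset.range N, f (φ (ψ k)))
    (by simpa [CesaroNull, ContinuousLinearMap.finsetSum_comp] using hall ψ hψ)
  simpa using this

/-- If `T : Y → X` is an operator whose adjoint `T* : X* → Y*` is Banach-Saks (every
bounded sequence in `X*` has a subsequence whose images under `T*` are norm-Cesàro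
convergent), then `X` has property (μ^s_{{T(B_Y)}}). -/
theorem stmt6 {X Y : Type*} [NormedAddCommGroup X] [NormedSpace ℝ X] [CompleteSpace X]
    [NormedAddCommGroup Y] [NormedSpace ℝ Y] [CompleteSpace Y]
    (T : Y →L[ℝ] X)
    (hT : ∀ f : ℕ → StrongDual ℝ X, Bornology.IsBounded (Set.range f) →
      ∃ φ : ℕ → ℕ, StrictMono φ ∧ ∃ g : StrongDual ℝ Y,
        Tendsto (fun N : ℕ => (N : ℝ)⁻¹ • ∑ k ∈ Finset.range N, (f (φ k)).comp T)
          atTop (𝓝 g)) :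
    PropMuSFam X {T '' Metric.closedBall (0 : Y) 1} :=
  stmt6_general T hT
end
end

section
/- Every bounded sequence (x_n) in a Banach space X admits a subsequence (x_{n_j}) such that either all subsequences of (x_{n_j}) are Cesàro convergent (in norm) to the same limit, or no subsequence of (x_{n_j}) is Cesàro convergent. -/
/-!
Call an infinite `M ⊆ ℕ` good if the Cesàro means of `u` along the increasing enumeration of `M`
form a Cauchy sequence. Goodness is a countable Boolean combination of conditions on finite
initial segments, and by the Galvin–Prikry theorem in Ellentuck's form (Ellentuck-open families
are completely Ramsey, Ramsey-null families form a σ-ideal, hence completely Ramsey families form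
a σ-algebra) some infinite `M` has either all or none of its infinite subsets good. In the first
case all the limits agree: if two subsequences had Cesàro limits `c₁ ≠ c₂`, splicing ever later
tails of them alternately would give a subsequence whose means come close to `c₁` and to `c₂`
infinitely often.
-/

open Filter Topology MeasureTheory Pointwise

noncomputable section

open Set

lemma exists_seq_of_forall_exists {α : Type*} {p : ℕ → α → Prop} {r : ℕ → α → α → Prop}
    {a : α} (ha : p 0 a) (h : ∀ n a, p n a → ∃ b, p (n + 1) b ∧ r n a b) :
    ∃ f : ℕ → α, f 0 = a ∧ ∀ n, p n (f n) ∧ r n (f n) (f (n + 1)) := by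
  choose g hg using fun n (x : {x // p n x}) => h n x x.2
  let f : (n : ℕ) → {x // p n x} := fun n => Nat.rec ⟨a, ha⟩ (fun n x => ⟨g n x, (hg n x).1⟩) n
  refine ⟨fun n => (f n).1, rfl, fun n => ⟨(f n).2, ?_⟩⟩
  exact (hg n (f n)).2

theorem exists_forall_lt_eq_of_forall_lt_eq_succ {β : Type*} {f : ℕ → ℕ → β} {P : ℕ → ℕ}
    (hP : StrictMono P) (h : ∀ n, ∀ k < P (n + 1), f (n + 1) k = f n k) :
    ∃ g : ℕ → β, ∀ n, ∀ k < P (n + 1), g k = f n k := by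
  have hle : ∀ m n, m ≤ n → ∀ k < P (m + 1), f n k = f m k := by
    intro m n hmn
    induction n, hmn using Nat.le_induction with
    | base => exact fun _ _ => rfl
    | succ n hmn ih =>
      exact fun k hk => (h n k (hk.trans_le (hP.monotone (by omega)))).trans (ih k hk)
  have hkP : ∀ k, k < P (k + 1) := fun k => (Nat.lt_succ_self k).trans_le (hP.id_le _)
  refine ⟨fun k => f k k, fun n k hk => ?_⟩
  rcases le_total k n with hkn | hnk
  · exact (hle k n hkn k (hkP k)).symm
  · exact hle n k hnk k hk

namespace Ellentuck

def above (t : Finset ℕ) (C : Set ℕ) : Set ℕ := {x ∈ C | ∀ a ∈ t, a < x}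

/-- The Ellentuck neighbourhood `[t, C]`. Only the part of `C` above `t` counts, so `t` is an
initial segment of every member. -/
def cyl (t : Finset ℕ) (C : Set ℕ) : Set (Set ℕ) :=
  {X | X.Infinite ∧ ↑t ⊆ X ∧ X ⊆ ↑t ∪ above t C}

variable {s t : Finset ℕ} {A B C D X : Set ℕ}

lemma above_subset : above t C ⊆ C := sep_subset _ _

lemma above_mono (h : C ⊆ D) : above t C ⊆ above t D := fun _ hx => ⟨h hx.1, hx.2⟩

lemma cyl_mono (h : C ⊆ D) : cyl t C ⊆ cyl t D :=
  fun _ hX => ⟨hX.1, hX.2.1, hX.2.2.trans (union_subset_union_right _ (above_mono h))⟩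

lemma mem_cyl_empty : X ∈ cyl ∅ C ↔ X.Infinite ∧ X ⊆ C := by
  simp [cyl, above]

def IsOpen (S : Set (Set ℕ)) : Prop :=
  ∀ X ∈ S, ∃ t C, X ∈ cyl t C ∧ cyl t C ⊆ S

def CompletelyRamsey (S : Set (Set ℕ)) : Prop :=
  ∀ t C, C.Infinite → ∃ D ⊆ C, D.Infinite ∧ (cyl t D ⊆ S ∨ Disjoint (cyl t D) S)

def RamseyNull (S : Set (Set ℕ)) : Prop :=
  ∀ t C, C.Infinite → ∃ D ⊆ C, D.Infinite ∧ Disjoint (cyl t D) S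

structure IsDenseLowerSet (Q : Set ℕ → Prop) : Prop where
  anti ⦃C D : Set ℕ⦄ : D ⊆ C → Q C → Q D
  exists_subset ⦃C : Set ℕ⦄ : C.Infinite → ∃ D ⊆ C, D.Infinite ∧ Q D

lemma IsDenseLowerSet.finset_forall {ι : Type*} {Q : ι → Set ℕ → Prop}
    (hQ : ∀ i, IsDenseLowerSet (Q i)) (I : Finset ι) :
    IsDenseLowerSet fun C => ∀ i ∈ I, Q i C := by
  refine ⟨fun C D hDC h i hi => (hQ i).anti hDC (h i hi), ?_⟩
  classical
  induction I using Finset.induction_on with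
  | empty => exact fun C hC => ⟨C, subset_rfl, hC, by simp⟩
  | insert i I _ ih =>
    intro C hC
    obtain ⟨D, hDC, hD, hDI⟩ := ih hC
    obtain ⟨D', hD'D, hD', hD'i⟩ := (hQ i).exists_subset hD
    refine ⟨D', hD'D.trans hDC, hD', (Finset.forall_mem_insert _ _ _).2 ⟨hD'i, ?_⟩⟩
    exact fun j hj => (hQ j).anti hD'D (hDI j hj)

theorem exists_fusion {Q : Finset ℕ → Set ℕ → Prop} (hQ : ∀ e, IsDenseLowerSet (Q e))
    (hA : A.Infinite) : ∃ B ⊆ A, B.Infinite ∧ ∀ e : Finset ℕ, ↑e ⊆ B → Q e (above e B) := by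
  -- `D (n + 1)` settles `Q e` for every `e ⊆ [0, min (D n)]`; `B` collects the minima.
  obtain ⟨D₀, hD₀A, hD₀, hQ₀⟩ := (hQ ∅).exists_subset hA
  obtain ⟨D, hD0, hDD⟩ := exists_seq_of_forall_exists (p := fun _ D => D.Infinite)
    (r := fun _ D D' => D' ⊆ D \ Iic (sInf D) ∧ ∀ e ∈ (Finset.range (sInf D + 1)).powerset, Q e D')
    hD₀ fun _ D hD => by
      obtain ⟨D', hD'D, hD', hQD'⟩ :=
        (IsDenseLowerSet.finset_forall hQ _).exists_subset (hD.sdiff (finite_Iic (sInf D)))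
      exact ⟨D', hD', hD'D, hQD'⟩
  have hD : ∀ n, (D n).Infinite := fun n => (hDD n).1
  replace hDD := fun n => (hDD n).2
  set b : ℕ → ℕ := fun n => sInf (D n)
  have hbD : ∀ n, b n ∈ D n := fun n => Nat.sInf_mem (hD n).nonempty
  have hDanti : Antitone D := antitone_nat_of_succ_le fun n => (hDD n).1.trans sdiff_subset
  have hb : StrictMono b := strictMono_nat_of_lt_succ fun n =>
    not_le.1 ((hDD n).1 (hbD (n + 1))).2
  have hBD : ∀ n, ∀ j, n ≤ j → b j ∈ D n := fun n j hnj => hDanti hnj (hbD j)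
  have hBD₀ : range b ⊆ D₀ := range_subset_iff.2 fun j => hD0 ▸ hBD 0 j (Nat.zero_le j)
  refine ⟨range b, hBD₀.trans hD₀A, infinite_range_of_injective hb.injective, fun e he => ?_⟩
  obtain rfl | hne := e.eq_empty_or_nonempty
  · exact (hQ ∅).anti (above_subset.trans hBD₀) hQ₀
  obtain ⟨i, hi⟩ := he (e.max'_mem hne)
  have hmax : ∀ a ∈ e, a ≤ b i := fun a ha => hi ▸ e.le_max' a ha
  refine (hQ e).anti ?_ ((hDD i).2 e (Finset.mem_powerset.2 fun a ha =>
    Finset.mem_range.2 (Nat.lt_succ_of_le (hmax a ha))))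
  rintro _ ⟨⟨j, rfl⟩, hj⟩
  exact hBD (i + 1) j (hb.lt_iff_lt.1 (hi ▸ hj _ (e.max'_mem hne)))

lemma exists_mem_cyl_union (hX : X ∈ cyl s B) (m : ℕ) :
    ∃ e : Finset ℕ, ↑e ⊆ B ∧ X ∈ cyl (s ∪ e) (above e B) ∧ ∀ x ∈ X, x ≤ m → x ∈ s ∪ e := by
  classical
  obtain ⟨hXinf, hsX, hXs⟩ := hX
  set e := (Finset.range (m + 1)).filter (fun x => x ∈ X ∧ x ∉ s)
  have he : ∀ x, x ∈ e ↔ x ≤ m ∧ x ∈ X ∧ x ∉ s := by simp [e]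
  have hle : ∀ x ∈ X, x ≤ m → x ∈ s ∪ e := fun x hx hxm => by
    by_cases hxs : x ∈ s <;> simp [hxs, he, hx, hxm]
  refine ⟨e, fun x hx => ((hXs ((he x).1 hx).2.1).resolve_left ((he x).1 hx).2.2).1,
    ⟨hXinf, ?_, fun x hx => ?_⟩, hle⟩
  · rw [Finset.coe_union]
    exact union_subset hsX fun x hx => ((he x).1 hx).2.1
  by_cases hxm : x ≤ m
  · exact Or.inl (hle x hx hxm)
  obtain hxs | ⟨hxB, hsx⟩ := hXs hx
  · exact Or.inl (Finset.mem_union_left _ hxs)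
  have hex : ∀ a ∈ e, a < x := fun a ha => ((he a).1 ha).1.trans_lt (not_le.1 hxm)
  exact Or.inr ⟨⟨hxB, hex⟩, fun a ha => (Finset.mem_union.1 ha).elim (hsx a) (hex a)⟩

def Rejects (S : Set (Set ℕ)) (t : Finset ℕ) (C : Set ℕ) : Prop :=
  ∀ D ⊆ C, D.Infinite → ¬ cyl t D ⊆ S

variable {S : Set (Set ℕ)}

lemma Rejects.anti (h : Rejects S t C) (hDC : D ⊆ C) : Rejects S t D :=
  fun E hE => h E (hE.trans hDC)

lemma isDenseLowerSet_accepts_or_rejects (S : Set (Set ℕ)) (t : Finset ℕ) :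
    IsDenseLowerSet fun C => cyl t C ⊆ S ∨ Rejects S t C where
  anti _ _ hDC h := h.imp (fun h => (cyl_mono hDC).trans h) fun h => h.anti hDC
  exists_subset C hC := by
    by_cases h : ∃ D ⊆ C, D.Infinite ∧ cyl t D ⊆ S
    · obtain ⟨D, hDC, hD, h⟩ := h
      exact ⟨D, hDC, hD, Or.inl h⟩
    · exact ⟨C, subset_rfl, hC, Or.inr fun D hDC hD hS => h ⟨D, hDC, hD, hS⟩⟩

lemma finite_setOf_not_rejects_insert
    (hdec : ∀ e : Finset ℕ, ↑e ⊆ B → cyl (s ∪ e) (above e B) ⊆ S ∨ Rejects S (s ∪ e) (above e B))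
    {e : Finset ℕ} (he : ↑e ⊆ B) (hrej : Rejects S (s ∪ e) (above e B)) :
    {x ∈ above e B | ¬ Rejects S (s ∪ insert x e) (above (insert x e) B)}.Finite := by
  -- Otherwise that set would accept `s ∪ e`: each `Y` in its neighbourhood lies in the
  -- accepted neighbourhood of `s ∪ e ∪ {min (Y \ (s ∪ e))}`.
  by_contra hinf
  refine hrej _ (sep_subset _ _) hinf fun Y hY => ?_
  obtain ⟨hYinf, hseY, hYse⟩ := hY
  have hne : (Y \ ↑(s ∪ e)).Nonempty := (hYinf.sdiff (s ∪ e).finite_toSet).nonempty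
  set x := sInf (Y \ ↑(s ∪ e))
  have hx : x ∈ Y \ ↑(s ∪ e) := Nat.sInf_mem hne
  obtain ⟨⟨hxe, hxrej⟩, hxse⟩ := (hYse hx.1).resolve_left hx.2
  have hxeB : ↑(insert x e) ⊆ B := by
    rw [Finset.coe_insert]
    exact insert_subset hxe.1 he
  have hacc := (hdec _ hxeB).resolve_right hxrej
  rw [Finset.union_insert] at hacc
  refine hacc ⟨hYinf, by simpa using insert_subset hx.1 hseY, fun y hy => ?_⟩
  by_cases hyx : y ∈ insert x (s ∪ e)
  · exact Or.inl hyx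
  obtain ⟨hyx, hyse⟩ := not_or.1 (Finset.mem_insert.not.1 hyx)
  have hxy : x < y := (Nat.sInf_le (show y ∈ Y \ ↑(s ∪ e) from ⟨hy, hyse⟩)).lt_of_ne (Ne.symm hyx)
  obtain ⟨⟨⟨hyB, hey⟩, -⟩, hsey⟩ := (hYse hy).resolve_left hyse
  exact Or.inr ⟨⟨hyB, (Finset.forall_mem_insert _ _ _).2 ⟨hxy, hey⟩⟩,
    (Finset.forall_mem_insert _ _ _).2 ⟨hxy, hsey⟩⟩

lemma disjoint_cyl_of_forall_rejects (hS : IsOpen S)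
    (h : ∀ e : Finset ℕ, ↑e ⊆ B → Rejects S (s ∪ e) (above e B)) : Disjoint (cyl s B) S := by
  refine disjoint_left.2 fun X hX hXS => ?_
  obtain ⟨t, C, ⟨-, htX, hXt⟩, htS⟩ := hS X hXS
  obtain ⟨e, heB, ⟨hXinf, hseX, hXse⟩, hle⟩ := exists_mem_cyl_union hX (t.sup id)
  have hYX : ∀ Y ∈ cyl (s ∪ e) (X ∩ above e B), Y ⊆ X := fun Y hY y hy =>
    (hY.2.2 hy).elim (fun h => hseX h) fun h => h.1.1
  refine h e heB (X ∩ above e B) inter_subset_right ?_ fun Y hY => htS ⟨hY.1, ?_, ?_⟩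
  · refine (hXinf.sdiff (s ∪ e).finite_toSet).mono fun x hx => ⟨hx.1, ?_⟩
    exact ((hXse hx.1).resolve_left hx.2).1
  · exact fun a ha => hY.2.1 (hle a (htX ha) (Finset.le_sup (f := id) ha))
  · exact (hYX Y hY).trans hXt

theorem IsOpen.completelyRamsey (hS : IsOpen S) : CompletelyRamsey S := by
  intro s A hA
  by_cases hacc : ∃ B ⊆ A, B.Infinite ∧ cyl s B ⊆ S
  · obtain ⟨B, hBA, hB, h⟩ := hacc
    exact ⟨B, hBA, hB, Or.inl h⟩
  have hrej : Rejects S s A := fun B hBA hB h => hacc ⟨B, hBA, hB, h⟩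
  obtain ⟨B₁, hB₁A, hB₁, hdec⟩ :=
    exists_fusion (fun e => isDenseLowerSet_accepts_or_rejects S (s ∪ e)) hA
  have hdense : ∀ e, IsDenseLowerSet fun C => ↑e ⊆ B₁ → Rejects S (s ∪ e) (above e B₁) →
      ∀ x ∈ C ∩ above e B₁, Rejects S (s ∪ insert x e) (above (insert x e) B₁) := by
    refine fun e => ⟨fun C D hDC h he hr x hx => h he hr x ⟨hDC hx.1, hx.2⟩, fun C hC => ?_⟩
    by_cases h : ↑e ⊆ B₁ ∧ Rejects S (s ∪ e) (above e B₁)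
    · refine ⟨_, sdiff_subset, hC.sdiff (finite_setOf_not_rejects_insert hdec h.1 h.2), ?_⟩
      exact fun _ _ x hx => by_contra fun hx' => hx.1.2 ⟨hx.2, hx'⟩
    · exact ⟨C, subset_rfl, hC, fun he hr => absurd ⟨he, hr⟩ h⟩
  obtain ⟨B₂, hB₂B₁, hB₂, hstep⟩ := exists_fusion hdense hB₁
  have hall : ∀ e : Finset ℕ, ↑e ⊆ B₂ → Rejects S (s ∪ e) (above e B₁) := by
    intro e
    induction e using Finset.induction_on_max with
    | empty => exact fun _ => by simpa using hrej.anti (above_subset.trans hB₁A)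
    | insert x e hlt ih =>
      intro he
      rw [Finset.coe_insert, insert_subset_iff] at he
      exact hstep e he.2 (he.2.trans hB₂B₁) (ih he.2) x ⟨⟨he.1, hlt⟩, hB₂B₁ he.1, hlt⟩
  exact ⟨B₂, hB₂B₁.trans hB₁A, hB₂, Or.inr (disjoint_cyl_of_forall_rejects hS
    fun e he => (hall e he).anti (above_mono hB₂B₁))⟩

lemma RamseyNull.isDenseLowerSet (h : RamseyNull S) (t : Finset ℕ) :
    IsDenseLowerSet fun C => Disjoint (cyl t C) S :=
  ⟨fun _ _ hDC hC => hC.mono_left (cyl_mono hDC), fun C hC => h t C hC⟩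

theorem RamseyNull.iUnion {S : ℕ → Set (Set ℕ)} (hS : ∀ k, RamseyNull (S k)) :
    RamseyNull (⋃ k, S k) := by
  intro s A hA
  obtain ⟨B, hBA, hB, hBS⟩ := exists_fusion
    (Q := fun e C => ∀ k ∈ Finset.range ((s ∪ e).sup id + 1), Disjoint (cyl (s ∪ e) C) (S k))
    (fun e => IsDenseLowerSet.finset_forall (fun k => (hS k).isDenseLowerSet (s ∪ e)) _) hA
  refine ⟨B, hBA, hB, disjoint_iUnion_right.2 fun k => disjoint_left.2 fun X hX hXk => ?_⟩
  obtain ⟨x, hxX, hkx⟩ := hX.1.exists_gt k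
  obtain ⟨e, heB, hXe, hle⟩ := exists_mem_cyl_union hX x
  have hk : k ∈ Finset.range ((s ∪ e).sup id + 1) := Finset.mem_range.2 <|
    Nat.lt_succ_of_le (hkx.le.trans (Finset.le_sup (f := id) (hle x hxX le_rfl)))
  exact disjoint_left.1 (hBS e heB k hk) hXe hXk

theorem CompletelyRamsey.compl (h : CompletelyRamsey S) : CompletelyRamsey Sᶜ := fun t C hC =>
  (h t C hC).imp fun _ ⟨hDC, hD, h⟩ =>
    ⟨hDC, hD, h.symm.imp subset_compl_iff_disjoint_right.2 disjoint_compl_right_iff_subset.2⟩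

theorem CompletelyRamsey.iUnion {S : ℕ → Set (Set ℕ)} (hS : ∀ k, CompletelyRamsey (S k)) :
    CompletelyRamsey (⋃ k, S k) := by
  -- `U` is the union of the Ellentuck interiors of the `S k`; each `S k \ U` is Ramsey null.
  set U := {X | ∃ k t C, X ∈ cyl t C ∧ cyl t C ⊆ S k}
  have hU : IsOpen U := fun X ⟨k, t, C, hX, h⟩ => ⟨t, C, hX, fun Y hY => ⟨k, t, C, hY, h⟩⟩
  have hUS : U ⊆ ⋃ k, S k := fun X ⟨k, t, C, hX, h⟩ => mem_iUnion.2 ⟨k, h hX⟩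
  have hnull : RamseyNull ((⋃ k, S k) \ U) := by
    rw [iUnion_sdiff]
    refine RamseyNull.iUnion fun k t C hC => ?_
    obtain ⟨D, hDC, hD, h | h⟩ := hS k t C hC
    · exact ⟨D, hDC, hD, disjoint_left.2 fun X hX hXU => hXU.2 ⟨k, t, D, hX, h⟩⟩
    · exact ⟨D, hDC, hD, h.mono_right sdiff_subset⟩
  intro t C hC
  obtain ⟨D, hDC, hD, hDnull⟩ := hnull t C hC
  obtain ⟨E, hED, hE, h | h⟩ := hU.completelyRamsey t D hD
  · exact ⟨E, hED.trans hDC, hE, Or.inl (h.trans hUS)⟩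
  · refine ⟨E, hED.trans hDC, hE, Or.inr (disjoint_left.2 fun X hX hXS => ?_)⟩
    exact disjoint_left.1 hDnull (cyl_mono hED hX) ⟨hXS, disjoint_left.1 h hX⟩

theorem CompletelyRamsey.iInter {S : ℕ → Set (Set ℕ)} (hS : ∀ k, CompletelyRamsey (S k)) :
    CompletelyRamsey (⋂ k, S k) := by
  simpa using (CompletelyRamsey.iUnion fun k => (hS k).compl).compl

lemma nth_eq_of_inter_Iio_eq {Y : Set ℕ} {c j : ℕ} (hX : X.Infinite)
    (hXY : X ∩ Iio c = Y ∩ Iio c) (hj : Nat.nth (· ∈ X) j < c) :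
    Nat.nth (· ∈ Y) j = Nat.nth (· ∈ X) j := by
  classical
  have hiff : ∀ x < c, x ∈ X ↔ x ∈ Y := fun x hx => by
    simpa [hx] using Set.ext_iff.1 hXY x
  have hmem : Nat.nth (· ∈ X) j ∈ Y := (hiff _ hj).1 (Nat.nth_mem_of_infinite hX j)
  have hcount : Nat.count (· ∈ Y) (Nat.nth (· ∈ X) j) = j := by
    refine Eq.trans ?_ (Nat.count_nth_of_infinite (p := (· ∈ X)) hX j)
    simp only [Nat.count_eq_card_filter_range]
    exact congr_arg _ (Finset.filter_congr fun x hx =>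
      (hiff x ((Finset.mem_range.1 hx).trans hj)).symm)
  simpa [hcount] using Nat.nth_count hmem

theorem isOpen_of_forall_exists_nth {T : Set (Set ℕ)}
    (hT : ∀ X ∈ T, X.Infinite ∧ ∃ J, ∀ Y : Set ℕ, Y.Infinite →
      (∀ j < J, Nat.nth (· ∈ Y) j = Nat.nth (· ∈ X) j) → Y ∈ T) : IsOpen T := by
  classical
  intro X hXT
  obtain ⟨hX, J, hJ⟩ := hT X hXT
  set c := Nat.nth (· ∈ X) J
  set t := (Finset.range c).filter (· ∈ X)
  have ht : ↑t = X ∩ Iio c := by ext; simp [t, and_comm]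
  refine ⟨t, Ici c, ⟨hX, ht ▸ inter_subset_left, fun x hx => ?_⟩,
    fun Y hY => hJ Y hY.1 fun j hj => ?_⟩
  · by_cases hxc : x < c
    · exact Or.inl (ht ▸ ⟨hx, hxc⟩)
    · refine Or.inr ⟨not_lt.1 hxc, fun a ha => ?_⟩
      exact (ht ▸ Finset.mem_coe.2 ha : a ∈ X ∩ Iio c).2.trans_le (not_lt.1 hxc)
  · obtain ⟨-, htY, hYt⟩ := hY
    rw [ht] at htY hYt
    refine nth_eq_of_inter_Iio_eq hX (subset_antisymm (subset_inter htY inter_subset_right)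
      fun y ⟨hy, hyc⟩ => ?_) ((Nat.nth_lt_nth hX).2 hj)
    exact (hYt hy).resolve_right fun h => not_le.2 hyc (mem_Ici.1 h.1)

theorem completelyRamsey_setOf_cauchySeq {α : Type*} [PseudoMetricSpace α]
    (F : (ℕ → ℕ) → ℕ → α) (hF : ∀ a b n, (∀ j < n, a j = b j) → F a n = F b n) :
    CompletelyRamsey {X | X.Infinite ∧ CauchySeq (F (Nat.nth (· ∈ X)))} := by
  set T : ℕ → ℕ → ℕ → Set (Set ℕ) := fun k N n => {X | X.Infinite ∧
    (N ≤ n → dist (F (Nat.nth (· ∈ X)) n) (F (Nat.nth (· ∈ X)) N) < 1 / (k + 1))}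
  have hT : ∀ k N n, CompletelyRamsey (T k N n) := fun k N n =>
    IsOpen.completelyRamsey <| isOpen_of_forall_exists_nth fun X hX => ⟨hX.1, max N n,
      fun Y hY hYX => ⟨hY, by
        rw [hF _ (Nat.nth (· ∈ X)) n fun j hj => hYX j (lt_max_of_lt_right hj),
          hF _ (Nat.nth (· ∈ X)) N fun j hj => hYX j (lt_max_of_lt_left hj)]
        exact hX.2⟩⟩
  have hCT : {X | X.Infinite ∧ CauchySeq (F (Nat.nth (· ∈ X)))} = ⋂ k, ⋃ N, ⋂ n, T k N n := by
    ext X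
    simp only [T, mem_iInter, mem_iUnion, mem_ofPred_eq, Metric.cauchySeq_iff']
    constructor
    · rintro ⟨hX, h⟩ k
      obtain ⟨N, hN⟩ := h _ Nat.one_div_pos_of_nat
      exact ⟨N, fun n => ⟨hX, hN n⟩⟩
    · intro h
      refine ⟨((h 0).choose_spec 0).1, fun ε hε => ?_⟩
      obtain ⟨k, hk⟩ := exists_nat_one_div_lt hε
      obtain ⟨N, hN⟩ := h k
      exact ⟨N, fun n hn => ((hN n).2 hn).trans hk⟩
  rw [hCT]
  exact CompletelyRamsey.iInter fun k => CompletelyRamsey.iUnion fun N =>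
    CompletelyRamsey.iInter fun n => hT k N n

lemma nth_mem_range_eq {f : ℕ → ℕ} (hf : StrictMono f) : Nat.nth (· ∈ range f) = f := by
  have hinf : (range f).Infinite := infinite_range_of_injective hf.injective
  funext n
  refine (Nat.eq_nth_of_strictMonoOn_of_mapsTo_of_surjOn f ?_ ?_ (hf.strictMonoOn _) ?_).symm
  · rintro _ ⟨k, rfl⟩
    exact ⟨k, fun h => absurd h hinf, rfl⟩
  · exact fun k _ => mem_range_self k
  · exact fun h => absurd h hinf

theorem CompletelyRamsey.exists_strictMono {S : Set (Set ℕ)} (hS : CompletelyRamsey S) :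
    ∃ φ : ℕ → ℕ, StrictMono φ ∧
      ((∀ ψ : ℕ → ℕ, StrictMono ψ → range (φ ∘ ψ) ∈ S) ∨
        ∀ ψ : ℕ → ℕ, StrictMono ψ → range (φ ∘ ψ) ∉ S) := by
  obtain ⟨M, -, hM, h⟩ := hS ∅ univ infinite_univ
  have hφ : StrictMono (Nat.nth (· ∈ M)) := Nat.nth_strictMono hM
  have hcyl : ∀ ψ : ℕ → ℕ, StrictMono ψ → range (Nat.nth (· ∈ M) ∘ ψ) ∈ cyl ∅ M :=
    fun ψ hψ => mem_cyl_empty.2 ⟨infinite_range_of_injective (hφ.comp hψ).injective,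
      range_subset_iff.2 fun _ => Nat.nth_mem_of_infinite hM _⟩
  exact ⟨_, hφ, h.imp (fun h ψ hψ => h (hcyl ψ hψ)) fun h ψ hψ => disjoint_left.1 h (hcyl ψ hψ)⟩

theorem exists_strictMono_cauchySeq_or_not {α : Type*} [PseudoMetricSpace α]
    (F : (ℕ → ℕ) → ℕ → α) (hF : ∀ a b n, (∀ j < n, a j = b j) → F a n = F b n) :
    ∃ φ : ℕ → ℕ, StrictMono φ ∧
      ((∀ ψ : ℕ → ℕ, StrictMono ψ → CauchySeq (F (φ ∘ ψ))) ∨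
        ∀ ψ : ℕ → ℕ, StrictMono ψ → ¬ CauchySeq (F (φ ∘ ψ))) := by
  obtain ⟨φ, hφ, h⟩ := (completelyRamsey_setOf_cauchySeq F hF).exists_strictMono
  refine ⟨φ, hφ, h.imp (fun h ψ hψ => ?_) fun h ψ hψ hψF => h ψ hψ ?_⟩
  · have := (h ψ hψ).2
    rwa [nth_mem_range_eq (hφ.comp hψ)] at this
  · rw [mem_ofPred_eq, nth_mem_range_eq (hφ.comp hψ)]
    exact ⟨infinite_range_of_injective (hφ.comp hψ).injective, hψF⟩

end Ellentuck

section Cesaro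

variable {E : Type*} [NormedAddCommGroup E] [NormedSpace ℝ E]

def cesaro (z : ℕ → E) (N : ℕ) : E := (N : ℝ)⁻¹ • ∑ k ∈ Finset.range N, z k

lemma cesaro_congr {z z' : ℕ → E} {N : ℕ} (h : ∀ k < N, z k = z' k) :
    cesaro z N = cesaro z' N := by
  rw [cesaro, Finset.sum_congr rfl fun k hk => h k (Finset.mem_range.1 hk), cesaro]

theorem tendsto_cesaro_of_add_eq {v w : ℕ → E} {a b : ℕ} (h : ∀ k, v (k + a) = w (k + b))
    {c : E} (hw : Tendsto (cesaro w) atTop (𝓝 c)) : Tendsto (cesaro v) atTop (𝓝 c) := by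
  rw [← tendsto_add_atTop_iff_nat a]
  set C := ∑ k ∈ Finset.range a, v k - ∑ k ∈ Finset.range b, w k with hC
  have hsum : ∀ n, ∑ k ∈ Finset.range (n + a), v k = C + ∑ k ∈ Finset.range (n + b), w k := by
    intro n
    have hshift : ∑ k ∈ Finset.range n, v (a + k) = ∑ k ∈ Finset.range n, w (b + k) :=
      Finset.sum_congr rfl fun k _ => by rw [add_comm a k, add_comm b k]; exact h k
    rw [add_comm n a, add_comm n b, Finset.sum_range_add, Finset.sum_range_add, hshift, hC]
    abel
  have hcongr : ∀ n ≥ 1, ((n + a : ℕ) : ℝ)⁻¹ • C +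
      (((n + a : ℕ) : ℝ)⁻¹ * ((n + b : ℕ) : ℝ)) • cesaro w (n + b) = cesaro v (n + a) := by
    intro n hn
    have hb : ((n + b : ℕ) : ℝ) ≠ 0 := by positivity
    rw [cesaro, cesaro, hsum, smul_add, smul_smul, mul_assoc, mul_inv_cancel₀ hb, mul_one]
  have hinv : Tendsto (fun n : ℕ => ((n + a : ℕ) : ℝ)⁻¹) atTop (𝓝 0) :=
    tendsto_inv_atTop_zero.comp (tendsto_natCast_atTop_atTop.comp (tendsto_add_atTop_nat a))
  have hratio : Tendsto (fun n : ℕ => ((n + a : ℕ) : ℝ)⁻¹ * ((n + b : ℕ) : ℝ)) atTop (𝓝 1) := by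
    refine ((tendsto_natCast_div_add_atTop ((a : ℝ) - b)).comp (tendsto_add_atTop_nat b)).congr
      fun n => ?_
    simp only [Function.comp_apply, Nat.cast_add]
    rw [div_eq_inv_mul]
    ring_nf
  refine Tendsto.congr' (eventually_atTop.2 ⟨1, hcongr⟩) ?_
  simpa using (hinv.smul_const C).add (hratio.smul (hw.comp (tendsto_add_atTop_nat b)))

theorem exists_splice_tendsto_cesaro {y : ℕ → E} {τ ψ : ℕ → ℕ} (hτ : StrictMono τ)
    (hψ : StrictMono ψ) {c c' : E}
    (hc : Tendsto (cesaro (y ∘ τ)) atTop (𝓝 c)) (hc' : Tendsto (cesaro (y ∘ ψ)) atTop (𝓝 c'))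
    (P : ℕ) {ε : ℝ} (hε : 0 < ε) :
    ∃ P' > P, dist (cesaro (y ∘ τ) P') c < ε ∧ ∃ τ' : ℕ → ℕ, StrictMono τ' ∧
      (∀ k < P', τ' k = τ k) ∧ Tendsto (cesaro (y ∘ τ')) atTop (𝓝 c') := by
  obtain ⟨P', hP'c, hPP'⟩ :=
    ((hc.eventually (Metric.ball_mem_nhds c hε)).and (eventually_gt_atTop P)).exists
  set p := τ (P' - 1) + 1
  refine ⟨P', hPP', hP'c, fun k => if k < P' then τ k else ψ (k - P' + p), ?_,
    fun k hk => if_pos hk, tendsto_cesaro_of_add_eq (a := P') (b := p) (fun k => ?_) hc'⟩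
  · refine strictMono_nat_of_lt_succ fun k => ?_
    by_cases hk : k + 1 < P'
    · simp only [hk, (Nat.lt_succ_self k).trans hk, if_true]
      exact hτ (Nat.lt_succ_self k)
    by_cases hk' : k < P'
    · have : k + 1 - P' + p = p := by omega
      simp only [hk, hk', if_true, if_false, this]
      have : k = P' - 1 := by omega
      exact this ▸ (Nat.lt_succ_self _).trans_le (hψ.id_le p)
    · simp only [hk, hk', if_false]
      exact hψ (by omega)
  · simp [Function.comp_apply]

theorem exists_strictMono_dist_cesaro_lt {y : ℕ → E} {ψ : ℕ → ℕ → ℕ} {c : ℕ → E}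
    (hψ : ∀ n, StrictMono (ψ n)) (hc : ∀ n, Tendsto (cesaro (y ∘ ψ n)) atTop (𝓝 (c n))) :
    ∃ τ P : ℕ → ℕ, StrictMono τ ∧ StrictMono P ∧
      ∀ n, dist (cesaro (y ∘ τ) (P n)) (c n) < 1 / (n + 1) := by
  -- stage `n` follows `ψ n` until its Cesàro means are within `1 / (n + 1)` of `c n`
  obtain ⟨σ, -, hσ⟩ := exists_seq_of_forall_exists
    (p := fun n (σ : (ℕ → ℕ) × ℕ) => StrictMono σ.1 ∧ Tendsto (cesaro (y ∘ σ.1)) atTop (𝓝 (c n)))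
    (r := fun n σ σ' => σ.2 < σ'.2 ∧ (∀ k < σ'.2, σ'.1 k = σ.1 k) ∧
      dist (cesaro (y ∘ σ.1) σ'.2) (c n) < 1 / (n + 1))
    (a := (ψ 0, 0)) ⟨hψ 0, hc 0⟩ fun n σ hσ => by
      obtain ⟨P', hP', hdist, τ', hτ', hagree, hlim⟩ := exists_splice_tendsto_cesaro
        hσ.1 (hψ (n + 1)) hσ.2 (hc (n + 1)) σ.2 Nat.one_div_pos_of_nat
      exact ⟨(τ', P'), ⟨hτ', hlim⟩, hP', hagree, hdist⟩
  set P := fun n => (σ n).2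
  have hP : StrictMono P := strictMono_nat_of_lt_succ fun n => (hσ n).2.1
  obtain ⟨τ, hτ⟩ := exists_forall_lt_eq_of_forall_lt_eq_succ (f := fun n => (σ n).1) hP
    fun n => (hσ n).2.2.1
  refine ⟨τ, P ∘ (· + 1), strictMono_nat_of_lt_succ fun k => ?_,
    hP.comp (strictMono_id.add_const 1), fun n => ?_⟩
  · have hk : k + 1 < P (k + 1 + 1) := (Nat.lt_succ_self _).trans_le (hP.id_le _)
    rw [hτ (k + 1) k ((Nat.lt_succ_self k).trans hk), hτ (k + 1) (k + 1) hk]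
    exact (hσ (k + 1)).1.1 (Nat.lt_succ_self k)
  · change dist (cesaro (y ∘ τ) (P (n + 1))) (c n) < _
    rw [cesaro_congr (z := y ∘ τ) (z' := y ∘ (σ n).1) fun k hk => congrArg y (hτ n k hk)]
    exact (hσ n).2.2.2

theorem eq_of_tendsto_cesaro {y : ℕ → E}
    (H : ∀ τ : ℕ → ℕ, StrictMono τ → ∃ L, Tendsto (cesaro (y ∘ τ)) atTop (𝓝 L))
    {ψ₁ ψ₂ : ℕ → ℕ} (h₁ : StrictMono ψ₁) (h₂ : StrictMono ψ₂) {c₁ c₂ : E}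
    (hc₁ : Tendsto (cesaro (y ∘ ψ₁)) atTop (𝓝 c₁))
    (hc₂ : Tendsto (cesaro (y ∘ ψ₂)) atTop (𝓝 c₂)) : c₁ = c₂ := by
  set c : ℕ → E := fun n => if Even n then c₁ else c₂
  obtain ⟨τ, P, hτ, hP, hdist⟩ := exists_strictMono_dist_cesaro_lt
    (y := y) (ψ := fun n => if Even n then ψ₁ else ψ₂) (c := c)
    (fun n => by by_cases hn : Even n <;> simp [hn, h₁, h₂])
    (fun n => by by_cases hn : Even n <;> simp [c, hn, hc₁, hc₂])
  obtain ⟨L, hL⟩ := H τ hτ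
  have hcL : Tendsto c atTop (𝓝 L) := (hL.comp hP.tendsto_atTop).congr_dist <|
    squeeze_zero (fun _ => dist_nonneg) (fun n => (hdist n).le)
      tendsto_one_div_add_atTop_nhds_zero_nat
  have h₁ : Tendsto (fun n => c (2 * n)) atTop (𝓝 L) :=
    hcL.comp (strictMono_mul_left_of_pos two_pos).tendsto_atTop
  have h₂ : Tendsto (fun n => c (2 * n + 1)) atTop (𝓝 L) :=
    hcL.comp ((strictMono_mul_left_of_pos two_pos).add_const 1).tendsto_atTop
  simp only [c, even_two_mul, Nat.not_even_two_mul_add_one, if_true, if_false] at h₁ h₂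
  exact (tendsto_nhds_unique tendsto_const_nhds h₁).trans
    (tendsto_nhds_unique h₂ tendsto_const_nhds)

end Cesaro

theorem stmt7_general {X : Type*} [NormedAddCommGroup X] [NormedSpace ℝ X] [CompleteSpace X]
    (u : ℕ → X) :
    ∃ φ : ℕ → ℕ, StrictMono φ ∧
      ((∃ y : X, ∀ ψ : ℕ → ℕ, StrictMono ψ →
          Tendsto (fun N : ℕ => (N : ℝ)⁻¹ • ∑ k ∈ Finset.range N, u (φ (ψ k)))
            atTop (𝓝 y)) ∨
        (∀ ψ : ℕ → ℕ, StrictMono ψ → ¬ ∃ y : X,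
          Tendsto (fun N : ℕ => (N : ℝ)⁻¹ • ∑ k ∈ Finset.range N, u (φ (ψ k)))
            atTop (𝓝 y))) := by
  obtain ⟨φ, hφ, hall | hnone⟩ := Ellentuck.exists_strictMono_cauchySeq_or_not
    (fun a => cesaro (u ∘ a)) fun a b n h => cesaro_congr fun k hk => congrArg u (h k hk)
  · have hconv : ∀ ψ : ℕ → ℕ, StrictMono ψ → ∃ L, Tendsto (cesaro ((u ∘ φ) ∘ ψ)) atTop (𝓝 L) :=
      fun ψ hψ => cauchySeq_tendsto_of_complete (hall ψ hψ)
    obtain ⟨y, hy⟩ := hconv id strictMono_id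
    refine ⟨φ, hφ, Or.inl ⟨y, fun ψ hψ => ?_⟩⟩
    obtain ⟨L, hL⟩ := hconv ψ hψ
    rwa [eq_of_tendsto_cesaro hconv hψ strictMono_id hL hy] at hL
  · exact ⟨φ, hφ, Or.inr fun ψ hψ ⟨y, hy⟩ => hnone ψ hψ hy.cauchySeq⟩

/-- Erdős-Magidor theorem: every bounded sequence in a Banach space admits a subsequence
such that either all of its subsequences are Cesàro convergent (in norm) to the same
limit, or none of its subsequences is Cesàro convergent. -/
theorem stmt7 {X : Type*} [NormedAddCommGroup X] [NormedSpace ℝ X] [CompleteSpace X]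
    (u : ℕ → X) (hb : Bornology.IsBounded (Set.range u)) :
    ∃ φ : ℕ → ℕ, StrictMono φ ∧
      ((∃ y : X, ∀ ψ : ℕ → ℕ, StrictMono ψ →
          Tendsto (fun N : ℕ => (N : ℝ)⁻¹ • ∑ k ∈ Finset.range N, u (φ (ψ k)))
            atTop (𝓝 y)) ∨
        (∀ ψ : ℕ → ℕ, StrictMono ψ → ¬ ∃ y : X,
          Tendsto (fun N : ℕ => (N : ℝ)⁻¹ • ∑ k ∈ Finset.range N, u (φ (ψ k)))
            atTop (𝓝 y))) :=
  stmt7_general u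
end
end

section
/- Let γ < 𝔭 be an ordinal and {S_α}_{α<γ} a collection of families of infinite subsets of ℕ such that for each α: (i) if B ⊆ ℕ is infinite and B \ A is finite for some A ∈ S_α, then B ∈ S_α; (ii) every infinite subset of ℕ contains an element of S_α. Then every infinite subset of ℕ contains an element of ⋂_{α<γ} S_α. -/
open Filter Topology

noncomputable section

/-- The pseudo-intersection number 𝔭: the least cardinality of a family `M` of infinite
subsets of `ℕ` with the finite intersection property (every finite subfamily has infinite
intersection) admitting no infinite pseudo-intersection. -/
noncomputable def pseudoIntersectionNumber : Cardinal :=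
  sInf { c : Cardinal |
    ∃ M : Set (Set ℕ), Cardinal.mk M = c ∧ (∀ A ∈ M, A.Infinite) ∧
      (∀ F : Finset (Set ℕ), ↑F ⊆ M → (⋂ A ∈ F, A).Infinite) ∧
      ¬ ∃ A : Set ℕ, A.Infinite ∧ ∀ B ∈ M, (A \ B).Finite }

/-!
Fix an infinite `B`. By transfinite recursion pick `C α ∈ S α` with `C α ⊆ B` and `C α ⊆* C β`
for all `β < α`: the earlier `C β` form a `⊆*`-decreasing chain of fewer than `𝔭` infinite sets,
so every finite subfamily has infinite intersection and the chain has an infinite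
pseudo-intersection `A ⊆ B`; then (ii) yields `C α ⊆ A`. Once all `C α`, `α < γ`, are built, a
pseudo-intersection of the whole chain lies almost inside each `C α` and so belongs to every
`S α` by (i).
-/

open Cardinal Set

universe u

lemma Set.Infinite.inter_of_sdiff_finite {α : Type*} {A B : Set α} (hA : A.Infinite)
    (hAB : (A \ B).Finite) : (A ∩ B).Infinite :=
  Set.sdiff_sdiff_right_self A B ▸ hA.sdiff hAB

lemma Set.Infinite.biInter_of_sdiff_finite {α : Type*} {E : Set α} (hE : E.Infinite)
    {F : Finset (Set α)} (hF : ∀ X ∈ F, (E \ X).Finite) : (⋂ X ∈ F, X).Infinite := by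
  have hfin : (E \ ⋂ X ∈ F, X).Finite := by
    simp only [sdiff_iInter]
    exact F.finite_toSet.biUnion hF
  exact (hE.inter_of_sdiff_finite hfin).mono inter_subset_right

lemma exists_infinite_pseudoIntersection_of_mk_lt {M : Set (Set ℕ)}
    (hM : #M < pseudoIntersectionNumber)
    (hfip : ∀ F : Finset (Set ℕ), ↑F ⊆ M → (⋂ A ∈ F, A).Infinite) :
    ∃ A : Set ℕ, A.Infinite ∧ ∀ B ∈ M, (A \ B).Finite := by
  have hinf : ∀ A ∈ M, A.Infinite := fun A hA ↦ by
    simpa using hfip {A} (by simpa using hA)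
  by_contra h
  rw [pseudoIntersectionNumber] at hM
  exact hM.not_ge (csInf_le' (show #M ∈ _ from ⟨M, rfl, hinf, hfip, h⟩))

lemma exists_infinite_subset_pseudoIntersection_of_directed {ι : Type*} [Preorder ι]
    [IsDirectedOrder ι] {f : ι → Set ℕ} (hcard : #(range f) < pseudoIntersectionNumber)
    (hinf : ∀ i, (f i).Infinite) (hanti : ∀ i j, i ≤ j → (f j \ f i).Finite)
    {B : Set ℕ} (hB : B.Infinite) (hfB : ∀ i, f i ⊆ B) :
    ∃ A ⊆ B, A.Infinite ∧ ∀ i, (A \ f i).Finite := by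
  classical
  cases isEmpty_or_nonempty ι
  · exact ⟨B, subset_rfl, hB, isEmptyElim⟩
  obtain ⟨i₀⟩ := ‹Nonempty ι›
  have hfip : ∀ F : Finset (Set ℕ), ↑F ⊆ range f → (⋂ X ∈ F, X).Infinite := by
    intro F hF
    rw [← image_univ, Finset.subset_set_image_iff] at hF
    obtain ⟨s, -, rfl⟩ := hF
    obtain ⟨j, hj⟩ := s.exists_le
    refine (hinf j).biInter_of_sdiff_finite fun X hX ↦ ?_
    obtain ⟨i, hi, rfl⟩ := Finset.mem_image.1 hX
    exact hanti i j (hj i hi)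
  obtain ⟨A, hA, hAf⟩ := exists_infinite_pseudoIntersection_of_mk_lt hcard hfip
  have hAB : (A \ B).Finite := (hAf _ ⟨i₀, rfl⟩).subset (sdiff_subset_sdiff_right (hfB i₀))
  exact ⟨A ∩ B, inter_subset_right, hA.inter_of_sdiff_finite hAB,
    fun i ↦ (hAf _ ⟨i, rfl⟩).subset (sdiff_subset_sdiff_left inter_subset_left)⟩

lemma mk_range_restrict_Iio_le_card {β : Type u} (f : Ordinal.{u} → β) (α : Ordinal.{u}) :
    #(range fun b : Iio α ↦ f b) ≤ α.card := by
  rw [← Cardinal.lift_le.{u + 1}, ← mk_Iio_ordinal]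
  simpa using mk_range_le_lift (f := fun b : Iio α ↦ f b)

lemma exists_infinite_subset_pseudoIntersection_Iio {f : Ordinal.{0} → Set ℕ} {α : Ordinal.{0}}
    (hα : α.card < pseudoIntersectionNumber) (hinf : ∀ β < α, (f β).Infinite)
    (hanti : ∀ β < α, ∀ β' < β, (f β \ f β').Finite)
    {B : Set ℕ} (hB : B.Infinite) (hfB : ∀ β < α, f β ⊆ B) :
    ∃ A ⊆ B, A.Infinite ∧ ∀ β < α, (A \ f β).Finite := by
  have hanti' : ∀ b b' : Iio α, b ≤ b' → (f b' \ f b).Finite := by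
    intro b b' hbb'
    rcases hbb'.lt_or_eq with hlt | rfl
    · exact hanti b' b'.2 b hlt
    · simp
  obtain ⟨A, hAB, hA, hAf⟩ := exists_infinite_subset_pseudoIntersection_of_directed
    (f := fun b : Iio α ↦ f b) ((mk_range_restrict_Iio_le_card f α).trans_lt hα)
    (fun b ↦ hinf b b.2) hanti' hB (fun b ↦ hfB b b.2)
  exact ⟨A, hAB, hA, fun β hβ ↦ hAf ⟨β, hβ⟩⟩

open Classical in
def diagonalChain (S : Ordinal → Set (Set ℕ)) (B : Set ℕ) (α : Ordinal) : Set ℕ :=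
  if h : ∃ C ∈ S α, C ⊆ B ∧ ∀ β < α, (C \ diagonalChain S B β).Finite then h.choose else B
termination_by α

lemma diagonalChain_spec {γ : Ordinal.{0}} (hγ : γ.card < pseudoIntersectionNumber)
    {S : Ordinal → Set (Set ℕ)} (hinf : ∀ α < γ, ∀ A ∈ S α, A.Infinite)
    (hS : ∀ α < γ, ∀ B : Set ℕ, B.Infinite → ∃ C ∈ S α, C ⊆ B) {B : Set ℕ} (hB : B.Infinite) :
    ∀ α < γ, diagonalChain S B α ∈ S α ∧ diagonalChain S B α ⊆ B ∧
      ∀ β < α, (diagonalChain S B α \ diagonalChain S B β).Finite := by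
  intro α
  induction α using WellFoundedLT.induction with
  | _ α ih =>
    intro hαγ
    have hex : ∃ C ∈ S α, C ⊆ B ∧ ∀ β < α, (C \ diagonalChain S B β).Finite := by
      obtain ⟨A, hAB, hA, hAf⟩ := exists_infinite_subset_pseudoIntersection_Iio
        ((Ordinal.card_le_card hαγ.le).trans_lt hγ)
        (fun β hβ ↦ hinf β (hβ.trans hαγ) _ (ih β hβ (hβ.trans hαγ)).1)
        (fun β hβ ↦ (ih β hβ (hβ.trans hαγ)).2.2) hB (fun β hβ ↦ (ih β hβ (hβ.trans hαγ)).2.1)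
      obtain ⟨C, hCS, hCA⟩ := hS α hαγ A hA
      exact ⟨C, hCS, hCA.trans hAB, fun β hβ ↦ (hAf β hβ).subset (sdiff_subset_sdiff_left hCA)⟩
    rw [diagonalChain, dif_pos hex]
    exact hex.choose_spec

/-- Diagonalization below 𝔭: if `γ < 𝔭` is an ordinal and `{S_α}_{α<γ}` are families of
infinite subsets of `ℕ` such that each `S_α` is closed under almost-containment and every
infinite subset of `ℕ` contains an element of `S_α`, then every infinite subset of `ℕ`
contains an element of `⋂_{α<γ} S_α`. -/
theorem stmt8 (γ : Ordinal) (hγ : γ.card < pseudoIntersectionNumber)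
    (S : Ordinal → Set (Set ℕ))
    (hinf : ∀ α < γ, ∀ A ∈ S α, A.Infinite)
    (h1 : ∀ α < γ, ∀ A ∈ S α, ∀ B : Set ℕ, B.Infinite → (B \ A).Finite → B ∈ S α)
    (h2 : ∀ α < γ, ∀ B : Set ℕ, B.Infinite → ∃ C ∈ S α, C ⊆ B) :
    ∀ B : Set ℕ, B.Infinite → ∃ C, C ⊆ B ∧ ∀ α < γ, C ∈ S α := by
  intro B hB
  have hchain := diagonalChain_spec hγ hinf h2 hB
  obtain ⟨A, hAB, hA, hAf⟩ := exists_infinite_subset_pseudoIntersection_Iio hγ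
    (fun α hα ↦ hinf α hα _ (hchain α hα).1) (fun α hα ↦ (hchain α hα).2.2) hB
    (fun α hα ↦ (hchain α hα).2.1)
  exact ⟨A, hAB, fun α hα ↦ h1 α hα _ (hchain α hα).1 A hA (hAf α hα)⟩

end
end

section
/- Let {E_i}_{i∈I} be a family of topological vector spaces with |I| < 𝔭, let E = Π_{i∈I} E_i with the product topology and ρ_i the coordinate projections. Let (u_n) be a sequence in E such that for every infinite A ⊆ ℕ and every i ∈ I there is an infinite B ⊆ A such that (ρ_i(u_n))_{n∈C} is Cesàro convergent to 0 in E_i for every infinite C ⊆ B. Then there is a subsequence of (u_n) all of whose subsequences are Cesàro convergent to 0 in E. -/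
/-!
Write `A ⊆* B` for `(A \ B).Finite`. Well-order `I` and choose, by transfinite recursion,
infinite sets `B i` such that coordinate `i` is Cesàro convergent to `0` along every subsequence
indexed inside `B i`, with `B i ⊆* B j` for `j < i`: at stage `i` the sets chosen so far form a
`⊆*`-chain of fewer than `𝔭` infinite sets, so they have an infinite pseudo-intersection, and
`B i` is taken inside it. A final pseudo-intersection `A` of all the `B i` does the job: a
subsequence indexed by `A` eventually lies in each `B i`, and Cesàro convergence ignores finitely
many initial terms.
-/

open Filter Topology

noncomputable section

theorem exists_pseudoIntersection_of_mk_lt {M : Set (Set ℕ)}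
    (hM : Cardinal.mk M < pseudoIntersectionNumber) (hinf : ∀ A ∈ M, A.Infinite)
    (hfip : ∀ F : Finset (Set ℕ), ↑F ⊆ M → (⋂ A ∈ F, A).Infinite) :
    ∃ A : Set ℕ, A.Infinite ∧ ∀ B ∈ M, (A \ B).Finite := by
  by_contra hc
  exact hM.not_ge (csInf_le' ⟨M, rfl, hinf, hfip, hc⟩)

theorem biInter_infinite_of_chain {ι : Type*} [LinearOrder ι] {g : ι → Set ℕ}
    (hinf : ∀ j, (g j).Infinite) (hchain : ∀ j k, j < k → (g k \ g j).Finite) (T : Finset ι) :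
    (⋂ j ∈ T, g j).Infinite := by
  rcases T.eq_empty_or_nonempty with rfl | hT
  · simpa using Set.infinite_univ
  set m := T.max' hT
  have hfin : (g m \ ⋂ j ∈ T, g j).Finite := by
    have hsub : g m \ ⋂ j ∈ T, g j ⊆ ⋃ j ∈ T, (g m \ g j) := by
      intro x hx
      simp only [Set.mem_sdiff, Set.mem_iInter, not_forall] at hx
      obtain ⟨hxm, j, hj, hxj⟩ := hx
      exact Set.mem_biUnion hj ⟨hxm, hxj⟩
    refine (T.finite_toSet.biUnion fun j hj => ?_).subset hsub
    rcases (T.le_max' j hj).lt_or_eq with hlt | hjm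
    · exact hchain j m hlt
    · simp [m, hjm]
  have := (hinf m).sdiff hfin
  rw [Set.sdiff_sdiff_right_self] at this
  exact this.mono Set.inter_subset_right

theorem exists_pseudoIntersection_of_chain {ι : Type} [LinearOrder ι]
    (hι : Cardinal.mk ι < pseudoIntersectionNumber) {g : ι → Set ℕ}
    (hinf : ∀ j, (g j).Infinite) (hchain : ∀ j k, j < k → (g k \ g j).Finite) :
    ∃ A : Set ℕ, A.Infinite ∧ ∀ j, (A \ g j).Finite := by
  classical
  obtain ⟨A, hA, hAg⟩ := exists_pseudoIntersection_of_mk_lt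
    (Cardinal.mk_range_le.trans_lt hι) (by rintro _ ⟨j, rfl⟩; exact hinf j) fun F hF => by
      obtain ⟨T, -, rfl⟩ := Finset.subset_set_image_iff.1 (Set.image_univ ▸ hF)
      rw [Finset.set_biInter_finset_image]
      exact biInter_infinite_of_chain hinf hchain T
  exact ⟨A, hA, fun j => hAg _ ⟨j, rfl⟩⟩

section WitnessChain

variable {ι : Type} [LinearOrder ι] [WellFoundedLT ι] (P : ι → Set ℕ → Prop)
  (h : ∀ A : Set ℕ, A.Infinite → ∀ i, ∃ B ⊆ A, B.Infinite ∧ P i B)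

open scoped Classical in
/-- The junk value `∅` never occurs when `#ι < 𝔭`, by `witnessChain_spec`. -/
def witnessChain : ι → Set ℕ :=
  WellFoundedLT.fix fun i below =>
    if hex : ∃ A : Set ℕ, A.Infinite ∧ ∀ j (hj : j < i), (A \ below j hj).Finite then
      (h hex.choose hex.choose_spec.1 i).choose
    else ∅

theorem witnessChain_spec (hι : Cardinal.mk ι < pseudoIntersectionNumber) (i : ι) :
    (witnessChain P h i).Infinite ∧ P i (witnessChain P h i) ∧
      ∀ j < i, (witnessChain P h i \ witnessChain P h j).Finite := by
  induction i using WellFoundedLT.induction with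
  | _ i ih =>
    have hex : ∃ A : Set ℕ, A.Infinite ∧ ∀ j (_ : j < i), (A \ witnessChain P h j).Finite := by
      obtain ⟨A, hA, hAg⟩ := exists_pseudoIntersection_of_chain
        ((Cardinal.mk_subtype_le _).trans_lt hι) (g := fun j : Set.Iio i => witnessChain P h j)
        (fun j => (ih j j.2).1) (fun j k hjk => (ih k k.2).2.2 j hjk)
      exact ⟨A, hA, fun j hj => hAg ⟨j, hj⟩⟩
    have hchosen : witnessChain P h i = (h hex.choose hex.choose_spec.1 i).choose :=
      (WellFoundedLT.fix_eq _ i).trans (dif_pos hex)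
    obtain ⟨hsub, hinf, hP⟩ := (h hex.choose hex.choose_spec.1 i).choose_spec
    rw [hchosen]
    exact ⟨hinf, hP, fun j hj =>
      (hex.choose_spec.2 j hj).subset (Set.sdiff_subset_sdiff_left hsub)⟩

end WitnessChain

theorem exists_pseudoIntersection_of_dense {I : Type}
    (hI : Cardinal.mk I < pseudoIntersectionNumber) (P : I → Set ℕ → Prop)
    (h : ∀ A : Set ℕ, A.Infinite → ∀ i, ∃ B ⊆ A, B.Infinite ∧ P i B) :
    ∃ A : Set ℕ, A.Infinite ∧ ∀ i, ∃ B, P i B ∧ (A \ B).Finite := by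
  let : LinearOrder I := IsWellOrder.linearOrder WellOrderingRel
  have : WellFoundedLT I := ⟨WellOrderingRel.isWellOrder.wf⟩
  have spec := witnessChain_spec P h hI
  obtain ⟨A, hA, hAg⟩ := exists_pseudoIntersection_of_chain hI
    (fun j => (spec j).1) (fun j k hjk => (spec k).2.2 j hjk)
  exact ⟨A, hA, fun i => ⟨_, (spec i).2.1, hAg i⟩⟩

theorem eventually_mem_of_diff_finite {α : Type*} {A B : Set α} {σ : ℕ → α}
    (hσ : σ.Injective) (hσA : ∀ k, σ k ∈ A) (hAB : (A \ B).Finite) :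
    ∀ᶠ k in atTop, σ k ∈ B := by
  rw [← Nat.cofinite_eq_atTop]
  filter_upwards [(hAB.preimage hσ.injOn).eventually_cofinite_notMem] with k hk
  by_contra hkB
  exact hk ⟨hσA k, hkB⟩

section Cesaro

variable {G : Type*} [AddCommMonoid G] [Module ℝ G] [TopologicalSpace G]

def cesaroMean (v : ℕ → G) (N : ℕ) : G :=
  (N : ℝ)⁻¹ • ∑ k ∈ Finset.range N, v k

theorem tendsto_cesaroMean_zero_of_const_add [ContinuousAdd G] [ContinuousSMul ℝ G]
    {v : ℕ → G} (K : ℕ)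
    (hv : Tendsto (cesaroMean fun k => v (K + k)) atTop (𝓝 0)) :
    Tendsto (cesaroMean v) atTop (𝓝 0) := by
  rw [← tendsto_add_atTop_iff_nat K]
  have hhead : Tendsto (fun M : ℕ => ((M : ℝ) + K)⁻¹ • ∑ k ∈ Finset.range K, v k) atTop (𝓝 0) := by
    simpa using (tendsto_inv_atTop_zero.comp
      (tendsto_atTop_add_const_right _ (K : ℝ) tendsto_natCast_atTop_atTop)).smul_const
        (∑ k ∈ Finset.range K, v k)
  have htail : Tendsto (fun M : ℕ => ((M : ℝ) / (M + K)) • cesaroMean (fun k => v (K + k)) M)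
      atTop (𝓝 0) := by
    simpa using (tendsto_natCast_div_add_atTop (K : ℝ)).smul hv
  rw [← add_zero (0 : G)]
  refine (hhead.add htail).congr' ?_
  filter_upwards [eventually_gt_atTop 0] with M hM
  have hcoef : (M : ℝ) / (M + K) * (M : ℝ)⁻¹ = (M + K : ℝ)⁻¹ := by field_simp
  rw [cesaroMean, cesaroMean, smul_smul, hcoef, add_comm M K, Finset.sum_range_add, smul_add,
    Nat.cast_add, add_comm (K : ℝ)]

end Cesaro

/-- Let `{E i}_{i ∈ I}` be topological vector spaces with `|I| < 𝔭` and `(u n)` a sequence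
in the product. If for every infinite `A ⊆ ℕ` and every coordinate `i` there is an
infinite `B ⊆ A` such that every subsequence of `(u n i)` indexed inside `B` is Cesàro
convergent to `0` in `E i`, then `(u n)` has a subsequence all of whose subsequences are
Cesàro convergent to `0` in the product topology. -/
theorem stmt9 {I : Type} (hI : Cardinal.mk I < pseudoIntersectionNumber)
    {E : I → Type*} [∀ i, AddCommGroup (E i)] [∀ i, Module ℝ (E i)]
    [∀ i, TopologicalSpace (E i)] [∀ i, IsTopologicalAddGroup (E i)]
    [∀ i, ContinuousSMul ℝ (E i)]
    (u : ℕ → ∀ i, E i)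
    (h : ∀ A : Set ℕ, A.Infinite → ∀ i : I, ∃ B ⊆ A, B.Infinite ∧
      ∀ φ : ℕ → ℕ, StrictMono φ → Set.range φ ⊆ B →
        Tendsto (fun N : ℕ => (N : ℝ)⁻¹ • ∑ k ∈ Finset.range N, u (φ k) i)
          atTop (𝓝 (0 : E i))) :
    ∃ φ : ℕ → ℕ, StrictMono φ ∧ ∀ ψ : ℕ → ℕ, StrictMono ψ →
      Tendsto (fun N : ℕ => (N : ℝ)⁻¹ • ∑ k ∈ Finset.range N, u (φ (ψ k)))
        atTop (𝓝 (0 : ∀ i, E i)) := by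
  obtain ⟨A, hA, hAB⟩ := exists_pseudoIntersection_of_dense hI _ h
  refine ⟨Nat.nth (· ∈ A), Nat.nth_strictMono hA, fun ψ hψ => tendsto_pi_nhds.2 fun i => ?_⟩
  obtain ⟨B, hB, hAB⟩ := hAB i
  have hσ : StrictMono fun k => Nat.nth (· ∈ A) (ψ k) := (Nat.nth_strictMono hA).comp hψ
  obtain ⟨K, hK⟩ := eventually_atTop.1 <|
    eventually_mem_of_diff_finite hσ.injective (fun k => Nat.nth_mem_of_infinite hA _) hAB
  simp only [Finset.sum_apply, Pi.smul_apply]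
  exact tendsto_cesaroMean_zero_of_const_add K <| hB _ (hσ.comp (strictMono_id.const_add K))
    (Set.range_subset_iff.2 fun k => hK _ (Nat.le_add_right K k))
end
end

section
/- Let {X_i}_{i∈I} be Banach spaces, 1 < p < ∞ with conjugate exponent q, and X = (⊕_{i∈I} X_i)_{ℓᵖ}. Let (y_j*) be a sequence in X* = (⊕ X_i*)_{ℓ^q} such that: (i) for every i ∈ I the sequence (ρ_i(y_j*))_j is μ(X_i*,X_i)-null; (ii) there is a norm convergent sequence (ξ̃_j) in ℓ^q(I) with ξ̃_j ≥ (||ρ_i(y_j*)||)_{i∈I} pointwise for all j. Then (y_j*) is μ(X*,X)-null. -/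
open Filter Topology MeasureTheory Pointwise ENNReal

noncomputable section

/-!
Weakly compact sets are norm bounded, say by `R`, and their coordinate projections are weakly
compact. Since `ξ j → ξlim` in `ℓ^q` with `q < ∞`, a single finite set `F ⊆ I` makes the
`ℓ^q`-tails of all late `ξ j` outside `F` small; by Hölder and the domination `‖y j i‖ ≤ ξ j i`,
the part of the pairing outside `F` is then uniformly small on `W`. The finitely many
coordinates in `F` converge uniformly on `W` by the coordinatewise Mackey convergence.
-/

section WeaklyCompact

variable {X Y : Type*} [NormedAddCommGroup X] [NormedSpace ℝ X] [NormedAddCommGroup Y]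
  [NormedSpace ℝ Y] {W : Set X}

theorem WeaklyCompact.image (hW : WeaklyCompact W) (f : X →L[ℝ] Y) :
    WeaklyCompact (f '' W) := by
  have h := IsCompact.image hW (WeakSpace.map f).continuous
  rw [Set.image_image] at h
  rwa [WeaklyCompact, Set.image_image]

theorem WeaklyCompact.isBounded (hW : WeaklyCompact W) : Bornology.IsBounded W := by
  have hpointwise (f : StrongDual ℝ X) : ∃ C, ∀ x : W, ‖f x‖ ≤ C := by
    obtain ⟨C, hC⟩ := isBounded_iff_forall_norm_le.1
      (IsCompact.image hW (WeakBilin.eval_continuous (topDualPairing ℝ X).flip f)).isBounded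
    exact ⟨C, fun x => hC _ ⟨_, ⟨x, x.2, rfl⟩, rfl⟩⟩
  obtain ⟨C, hC⟩ := banach_steinhaus (g := fun x : W => NormedSpace.inclusionInDoubleDual ℝ X x)
    hpointwise
  refine isBounded_iff_forall_norm_le.2 ⟨C, fun x hx => ?_⟩
  rw [← (NormedSpace.inclusionInDoubleDualLi ℝ (E := X)).norm_map x]
  exact hC ⟨x, hx⟩

end WeaklyCompact

theorem TendstoUniformlyOn.finset_sum {ι α β γ : Type*} [UniformSpace β] [AddCommGroup β]
    [IsUniformAddGroup β] {l : Filter γ} {W : Set α} {F : ι → γ → α → β} {G : ι → α → β}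
    (s : Finset ι) (h : ∀ i ∈ s, TendstoUniformlyOn (F i) (G i) l W) :
    TendstoUniformlyOn (fun n x => ∑ i ∈ s, F i n x) (fun x => ∑ i ∈ s, G i x) l W := by
  classical
  induction s using Finset.induction_on with
  | empty => simpa using (tendsto_const_nhds (x := (0 : β)) (f := l)).tendstoUniformlyOn_const W
  | insert i s hi ih =>
    simp_rw [Finset.sum_insert hi]
    exact (h i (s.mem_insert_self i)).add (ih fun j hj => h j (Finset.mem_insert_of_mem hj))

namespace lp

variable {α : Type*} {E : α → Type*} [∀ i, NormedAddCommGroup (E i)] {p q : ℝ≥0∞}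

theorem sub_sum_single_apply [DecidableEq α] (f : lp E p) (s : Finset α) (i : α) :
    (f - ∑ j ∈ s, lp.single p j (f j)) i = if i ∈ s then 0 else f i := by
  simp only [lp.coeFn_sub, Pi.sub_apply, lp.coeFn_sum, Finset.sum_apply, lp.single_apply,
    Finset.sum_pi_single]
  split_ifs <;> simp

theorem exists_eventually_norm_sub_sum_single_lt [Fact (1 ≤ p)] [DecidableEq α] (hp : p ≠ ⊤)
    {ι : Type*} {l : Filter ι} {ξ : ι → lp E p} {ξlim : lp E p} (hξ : Tendsto ξ l (𝓝 ξlim))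
    {δ : ℝ} (hδ : 0 < δ) :
    ∃ s : Finset α, ∀ᶠ j in l, ‖ξ j - ∑ i ∈ s, lp.single p i (ξ j i)‖ < δ := by
  obtain ⟨s, hs⟩ := ((lp.hasSum_single hp ξlim).eventually (Metric.ball_mem_nhds ξlim hδ)).exists
  have hcont : Continuous fun f : lp E p => ‖f - ∑ i ∈ s, lp.single p i (f i)‖ := by
    have (i : α) : Continuous fun f : lp E p => lp.single p i (f i) :=
      (lp.isometry_single i).continuous.comp (lp.lipschitzWith_one_eval p i).continuous
    fun_prop
  refine ⟨s, (hcont.tendsto ξlim).comp hξ |>.eventually (gt_mem_nhds ?_)⟩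
  simpa [dist_eq_norm, norm_sub_rev] using hs

theorem summable_and_norm_tsum_le_of_norm_le_mul {F : α → Type*} [∀ i, NormedAddCommGroup (F i)]
    (hpq : p.toReal.HolderConjugate q.toReal) {G : Type*} [NormedAddCommGroup G] [CompleteSpace G]
    (x : lp E p) (b : lp F q) {f : α → G} (hf : ∀ i, ‖f i‖ ≤ ‖b i‖ * ‖x i‖) :
    Summable f ∧ ‖∑' i, f i‖ ≤ ‖b‖ * ‖x‖ := by
  obtain ⟨C, -, hCle, hC⟩ := Real.inner_le_Lp_mul_Lq_hasSum_of_nonneg hpq.symm (norm_nonneg' b)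
    (norm_nonneg' x) (fun i => norm_nonneg (b i)) (fun i => norm_nonneg (x i))
    (lp.hasSum_norm hpq.symm.pos b) (lp.hasSum_norm hpq.pos x)
  have hfs : Summable fun i => ‖f i‖ := hC.summable.of_nonneg_of_le (fun i => norm_nonneg _) hf
  refine ⟨hfs.of_norm, ?_⟩
  calc ‖∑' i, f i‖ ≤ ∑' i, ‖f i‖ := norm_tsum_le_tsum_norm hfs
    _ ≤ C := hC.tsum_eq ▸ hfs.tsum_le_tsum hf hC.summable
    _ ≤ ‖b‖ * ‖x‖ := hCle

theorem norm_tsum_apply_sub_sum_le [∀ i, NormedSpace ℝ (E i)]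
    (hpq : p.toReal.HolderConjugate q.toReal) (x : lp E p) (g : ∀ i, StrongDual ℝ (E i))
    (b : lp (fun _ : α => ℝ) q) (s : Finset α) (hb : ∀ i ∉ s, ‖g i‖ ≤ ‖b i‖) :
    ‖∑' i, g i (x i) - ∑ i ∈ s, g i (x i)‖ ≤ ‖b‖ * ‖x‖ := by
  set f : α → ℝ := fun i => g i (x i)
  have htail (i : α) : ‖(↑s : Set α)ᶜ.indicator f i‖ ≤ ‖b i‖ * ‖x i‖ := by
    by_cases hi : i ∈ s
    · simp [hi, mul_nonneg]
    · rw [Set.indicator_of_mem (by simpa using hi)]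
      exact (g i).le_opNorm (x i) |>.trans (by gcongr; exact hb i hi)
  obtain ⟨hsum, hle⟩ := summable_and_norm_tsum_le_of_norm_le_mul hpq x b htail
  have hf : Summable f :=
    s.summable_compl_iff.1 ((summable_subtype_iff_indicator (s := (↑s : Set α)ᶜ)).2 hsum)
  rwa [← hf.sum_add_tsum_compl, add_sub_cancel_left, tsum_subtype]

end lp

theorem stmt12_general {I : Type} {E : I → Type*} [∀ i, NormedAddCommGroup (E i)]
    [∀ i, NormedSpace ℝ (E i)]
    (p q : ℝ≥0∞) [Fact (1 ≤ p)] [Fact (1 ≤ q)]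
    (hp1 : 1 < p) (hpt : p < ⊤) (hpq : 1 / p + 1 / q = 1)
    (y : ℕ → lp (fun i => StrongDual ℝ (E i)) q)
    (hcoord : ∀ i, ∀ W : Set (E i), WeaklyCompact W →
      TendstoUniformlyOn (fun j x => y j i x) 0 atTop W)
    (ξ : ℕ → lp (fun _ : I => ℝ) q) (ξlim : lp (fun _ : I => ℝ) q)
    (hconv : Tendsto ξ atTop (𝓝 ξlim))
    (hdom : ∀ j i, ‖y j i‖ ≤ ξ j i) :
    ∀ W : Set (lp E p), WeaklyCompact W →
      TendstoUniformlyOn (fun j x => ∑' i, y j i (x i)) 0 atTop W := by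
  classical
  have : p.HolderConjugate q := holderConjugate_iff.2 (by simpa only [one_div] using hpq)
  have hq : q ≠ ⊤ := ((HolderConjugate.lt_top_iff_one_lt q p).2 hp1).ne
  have hconj : p.toReal.HolderConjugate q.toReal := HolderConjugate.toReal_of_ne_top hpt.ne hq
  intro W hW
  obtain ⟨R, hR, hWR⟩ := hW.isBounded.exists_pos_norm_le
  have hhead (F : Finset I) :
      TendstoUniformlyOn (fun j x => ∑ i ∈ F, y j i (x i)) 0 atTop W := by
    simpa [lp.evalCLM, Pi.zero_def] using TendstoUniformlyOn.finset_sum F fun i _ =>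
      ((hcoord i _ (hW.image (lp.evalCLM ℝ E p i))).comp (lp.evalCLM ℝ E p i)).mono
        (Set.subset_preimage_image _ W)
  rw [Metric.tendstoUniformlyOn_iff]
  intro ε hε
  obtain ⟨F, hF⟩ := lp.exists_eventually_norm_sub_sum_single_lt hq hconv
    (div_pos hε (mul_pos two_pos hR))
  filter_upwards [hF, Metric.tendstoUniformlyOn_iff.1 (hhead F) (ε / 2) (half_pos hε)]
    with j hξj hheadj x hx
  have htail : ‖∑' i, y j i (x i) - ∑ i ∈ F, y j i (x i)‖ ≤ ε / 2 := by
    have hdomF (i : I) (hi : i ∉ F) : ‖y j i‖ ≤ ‖(ξ j - ∑ i ∈ F, lp.single q i (ξ j i)) i‖ := by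
      rw [lp.sub_sum_single_apply, if_neg hi]
      exact (hdom j i).trans (le_abs_self _)
    calc _ ≤ ‖ξ j - ∑ i ∈ F, lp.single q i (ξ j i)‖ * ‖x‖ :=
          lp.norm_tsum_apply_sub_sum_le hconj x (y j) _ F hdomF
      _ ≤ ε / (2 * R) * R := mul_le_mul hξj.le (hWR x hx) (norm_nonneg _) (by positivity)
      _ = ε / 2 := by field_simp
  have hheadx : ‖∑ i ∈ F, y j i (x i)‖ < ε / 2 := by simpa using hheadj x hx
  rw [Pi.zero_apply, dist_zero_left]
  calc ‖∑' i, y j i (x i)‖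
      ≤ ‖∑' i, y j i (x i) - ∑ i ∈ F, y j i (x i)‖ + ‖∑ i ∈ F, y j i (x i)‖ :=
        norm_le_norm_sub_add _ _
    _ < ε / 2 + ε / 2 := add_lt_add_of_le_of_lt htail hheadx
    _ = ε := add_halves ε

/-- Let `X = (⊕_i X_i)_{ℓᵖ}`, `1 < p < ∞`, with dual `(⊕_i X_i*)_{ℓ^q}`, `1/p + 1/q = 1`.
If `(y j)` is a sequence in the dual whose coordinates are `μ(X_i*,X_i)`-null and which is
dominated pointwise by a norm convergent sequence in `ℓ^q(I)`, then `(y j)` is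
`μ(X*,X)`-null (with the pairing `⟨y, x⟩ = ∑' i, y i (x i)`). -/
theorem stmt12 {I : Type} {E : I → Type*} [∀ i, NormedAddCommGroup (E i)]
    [∀ i, NormedSpace ℝ (E i)] [∀ i, CompleteSpace (E i)]
    (p q : ℝ≥0∞) [Fact (1 ≤ p)] [Fact (1 ≤ q)]
    (hp1 : 1 < p) (hpt : p < ⊤) (hpq : 1 / p + 1 / q = 1)
    (y : ℕ → lp (fun i => StrongDual ℝ (E i)) q)
    (hcoord : ∀ i, ∀ W : Set (E i), WeaklyCompact W →
      TendstoUniformlyOn (fun j x => y j i x) 0 atTop W)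
    (ξ : ℕ → lp (fun _ : I => ℝ) q) (ξlim : lp (fun _ : I => ℝ) q)
    (hconv : Tendsto ξ atTop (𝓝 ξlim))
    (hdom : ∀ j i, ‖y j i‖ ≤ ξ j i) :
    ∀ W : Set (lp E p), WeaklyCompact W →
      TendstoUniformlyOn (fun j x => ∑' i, y j i (x i)) 0 atTop W :=
  stmt12_general p q hp1 hpt hpq y hcoord ξ ξlim hconv hdom
end
end

section
/- Let X be a Köthe function space with order continuous norm over a finite measure space (Ω,Σ,ν). Then the inclusion operator i : L∞(ν) → X is super weakly compact. -/
open Filter Topology MeasureTheory Pointwise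

noncomputable section

/-- An `ε`-separated dyadic tree of height `n` inside `C`: nodes indexed by boolean words
of length `≤ n`, each node the midpoint of its two children, children `ε`-separated. -/
def DyadicTreeIn {X : Type*} [NormedAddCommGroup X] [NormedSpace ℝ X]
    (C : Set X) (ε : ℝ) (n : ℕ) : Prop :=
  ∃ x : List Bool → X,
    (∀ s : List Bool, s.length ≤ n → x s ∈ C) ∧
    ∀ s : List Bool, s.length < n →
      x s = (2 : ℝ)⁻¹ • (x (s ++ [false]) + x (s ++ [true])) ∧
      ε ≤ ‖x (s ++ [false]) - x (s ++ [true])‖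

/-- A bounded convex set is super weakly compact iff for every `ε > 0` the heights of the
`ε`-separated dyadic trees contained in it are bounded; we take this as the definition of a
super weakly compact set. -/
def SuperWeaklyCompactSet {X : Type*} [NormedAddCommGroup X] [NormedSpace ℝ X]
    (C : Set X) : Prop :=
  Bornology.IsBounded C ∧ ∀ ε : ℝ, 0 < ε → ∃ n : ℕ, ¬ DyadicTreeIn C ε n

/-- An operator is super weakly compact if the image of the closed unit ball is a super
weakly compact set. -/
def SuperWeaklyCompactOperator {X Y : Type*} [NormedAddCommGroup X] [NormedSpace ℝ X]
    [NormedAddCommGroup Y] [NormedSpace ℝ Y] (T : Y →L[ℝ] X) : Prop :=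
  SuperWeaklyCompactSet (T '' Metric.closedBall (0 : Y) 1)

/-!
Order continuity makes the norm of `X` continuous for the `L¹`-norm on each order interval
`[-c, c]`: a sequence in `[-c, c]` with summable `L¹`-norms is dominated by the truncated tails
`(∑_{k ≥ n} |x k|) ⊓ c`, which decrease to `0`. Differences of points of `i(B_{L∞})` lie in
`[-2, 2]`, so an `ε`-separated dyadic tree there is `δ`-separated in `L¹`, hence
`δ / √ν(Ω)`-separated in `L²`, while it stays in the ball of radius `√ν(Ω)` of `L²`. In a Hilbert
space the parallelogram law bounds the height of such trees by `4 ν(Ω)² / δ²`.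
-/

open scoped ENNReal

section LatticeEmbedding

variable {X E F : Type*}

theorem map_le_map_iff_of_map_sup [Lattice X] [Lattice E] {j : X → E}
    (hinj : Function.Injective j) (hsup : ∀ x y, j (x ⊔ y) = j x ⊔ j y) {x y : X} :
    j x ≤ j y ↔ x ≤ y := by
  rw [← sup_eq_right, ← hsup, hinj.eq_iff, sup_eq_right]

theorem map_abs_of_map_sup [Lattice X] [AddGroup X] [Lattice E] [AddGroup E] [FunLike F X E]
    [AddMonoidHomClass F X E] {j : F} (hsup : ∀ x y, j (x ⊔ y) = j x ⊔ j y) (x : X) :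
    j |x| = |j x| := by
  rw [abs, abs, hsup, map_neg]

end LatticeEmbedding

section OrderContinuity

variable {X E F : Type*} [NormedAddCommGroup X] [Lattice X]
  [NormedAddCommGroup E] [Lattice E] [IsOrderedAddMonoid E] [HasSolidNorm E] [FunLike F X E]
  [AddMonoidHomClass F X E] {j : F}

theorem isGLB_range_zero_of_map_le (hinj : Function.Injective j)
    (hsup : ∀ x y, j (x ⊔ y) = j x ⊔ j y) {z : ℕ → X} {v : ℕ → E} (hz : ∀ n, 0 ≤ z n)
    (hzv : ∀ n, j (z n) ≤ v n) (hv : Tendsto v atTop (𝓝 0)) : IsGLB (Set.range z) 0 := by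
  refine ⟨Set.forall_mem_range.2 hz, fun b hb => ?_⟩
  have hb0 : j (b ⊔ 0) ≤ j 0 :=
    (map_zero j).symm ▸ ge_of_tendsto' hv fun n =>
      ((map_le_map_iff_of_map_sup hinj hsup).2 (sup_le (hb ⟨n, rfl⟩) (hz n))).trans (hzv n)
  exact le_sup_left.trans ((map_le_map_iff_of_map_sup hinj hsup).1 hb0)

variable [IsOrderedAddMonoid X] [HasSolidNorm X] [CompleteSpace E]

theorem tendsto_norm_of_summable_norm_map (hinj : Function.Injective j)
    (hsup : ∀ x y, j (x ⊔ y) = j x ⊔ j y)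
    (hsolid : ∀ (f : E) (x : X), |f| ≤ |j x| → ∃ z, j z = f)
    (horder : ∀ u : ℕ → X, Antitone u → IsGLB (Set.range u) 0 →
      Tendsto (fun n => ‖u n‖) atTop (𝓝 0))
    {c : X} {x : ℕ → X} (hxc : ∀ n, |j (x n)| ≤ j c) (hx : Summable fun n => ‖j (x n)‖) :
    Tendsto (fun n => ‖x n‖) atTop (𝓝 0) := by
  have hle : ∀ {x y : X}, j x ≤ j y ↔ x ≤ y := map_le_map_iff_of_map_sup hinj hsup
  set f : ℕ → E := fun n => |j (x n)|
  have hf : Summable f := .of_norm (by simpa only [f, norm_abs_eq_norm] using hx)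
  -- `v n` is the tail `∑_{k ≥ n} f k`; capping it by `j c` keeps it inside the range of `j`.
  set v : ℕ → E := fun n => ∑' k, f (k + n)
  have hv_nonneg : ∀ n, 0 ≤ v n := fun n => tsum_nonneg fun k => abs_nonneg _
  have hv_succ : ∀ n, v (n + 1) ≤ v n := fun n => by
    rw [show v n = f n + v (n + 1) by
      simpa [v, add_assoc, add_comm 1 n] using
        ((summable_nat_add_iff n).2 hf).tsum_eq_zero_add]
    exact le_add_of_nonneg_left (abs_nonneg _)
  have hf_le_v : ∀ n, f n ≤ v n := fun n => by
    simpa using ((summable_nat_add_iff n).2 hf).le_tsum 0 fun k _ => abs_nonneg _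
  have hc : 0 ≤ j c := (abs_nonneg _).trans (hxc 0)
  have hw : ∀ n, ∃ z, j z = v n ⊓ j c := fun n =>
    hsolid _ c (by
      rw [abs_of_nonneg (le_inf (hv_nonneg n) hc), abs_of_nonneg hc]; exact inf_le_right)
  choose z hz using hw
  have hz_nonneg : ∀ n, 0 ≤ z n := fun n => by
    rw [← hle, map_zero, hz]; exact le_inf (hv_nonneg n) hc
  have hz_anti : Antitone z := antitone_nat_of_succ_le fun n => by
    rw [← hle, hz, hz]; exact inf_le_inf_right _ (hv_succ n)
  have hxz : ∀ n, ‖x n‖ ≤ ‖z n‖ := fun n => by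
    refine norm_le_norm_of_abs_le_abs ?_
    rw [abs_of_nonneg (hz_nonneg n), ← hle, hz, map_abs_of_map_sup hsup]
    exact le_inf (hf_le_v n) (hxc n)
  have hglb : IsGLB (Set.range z) 0 :=
    isGLB_range_zero_of_map_le hinj hsup hz_nonneg (fun n => (hz n).trans_le inf_le_left)
      (tendsto_sum_nat_add f)
  exact squeeze_zero (fun _ => norm_nonneg _) hxz (horder z hz_anti hglb)

theorem exists_pos_le_norm_map_of_le_norm (hinj : Function.Injective j)
    (hsup : ∀ x y, j (x ⊔ y) = j x ⊔ j y)
    (hsolid : ∀ (f : E) (x : X), |f| ≤ |j x| → ∃ z, j z = f)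
    (horder : ∀ u : ℕ → X, Antitone u → IsGLB (Set.range u) 0 →
      Tendsto (fun n => ‖u n‖) atTop (𝓝 0))
    (c : X) {ε : ℝ} (hε : 0 < ε) :
    ∃ δ > 0, ∀ x : X, |j x| ≤ j c → ε ≤ ‖x‖ → δ ≤ ‖j x‖ := by
  by_contra! h
  choose x hxc hxε hx using fun n : ℕ => h ((1 / 2) ^ n) (by positivity)
  have hlim := tendsto_norm_of_summable_norm_map hinj hsup hsolid horder hxc
    (summable_geometric_two.of_nonneg_of_le (fun _ => norm_nonneg _) fun n => (hx n).le)
  obtain ⟨n, hn⟩ := (hlim.eventually (gt_mem_nhds hε)).exists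
  exact (hxε n).not_gt hn

end OrderContinuity

namespace MeasureTheory.Lp

variable {α E : Type*} [MeasurableSpace α] {μ : Measure α} [NormedAddCommGroup E]

theorem ae_norm_le_norm (f : Lp E ∞ μ) : ∀ᵐ x ∂μ, ‖f x‖ ≤ ‖f‖ := by
  simpa only [Lp.norm_def, toReal_eLpNorm (Lp.aestronglyMeasurable f)] using
    ae_le_lpNorm_exponent_top (Lp.memLp f)

variable [IsFiniteMeasure μ] [NormedSpace ℝ E] {p q : ℝ≥0∞}

def inclusionₗ (hpq : p ≤ q) : Lp E q μ →ₗ[ℝ] Lp E p μ where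
  toFun f := ⟨f, Lp.antitone hpq f.2⟩
  map_add' _ _ := rfl
  map_smul' _ _ := rfl

theorem norm_inclusionₗ_le (hp : p ≠ 0) (hpq : p ≤ q) (f : Lp E q μ) :
    ‖inclusionₗ hpq f‖ ≤ (μ Set.univ).toReal ^ (1 / p.toReal - 1 / q.toReal) * ‖f‖ := by
  have hexp : 0 ≤ 1 / p.toReal - 1 / q.toReal := by
    rcases eq_or_ne q ∞ with rfl | hq
    · simp
    have hp' : 0 < p.toReal := ENNReal.toReal_pos hp (ne_top_of_le_ne_top hq hpq)
    exact sub_nonneg.2 (one_div_le_one_div_of_le hp' (ENNReal.toReal_mono hq hpq))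
  rw [Lp.norm_def, Lp.norm_def, ENNReal.toReal_rpow, mul_comm, ← ENNReal.toReal_mul]
  exact ENNReal.toReal_mono
    (ENNReal.mul_ne_top (Lp.eLpNorm_ne_top f)
      (ENNReal.rpow_ne_top_of_nonneg hexp (measure_ne_top _ _)))
    (eLpNorm_le_eLpNorm_mul_rpow_measure_univ hpq (Lp.aestronglyMeasurable f))

theorem norm_inclusionₗ_two_one_le (f : Lp E 2 μ) :
    ‖inclusionₗ one_le_two f‖ ≤ √(μ Set.univ).toReal * ‖f‖ := by
  have h := norm_inclusionₗ_le one_ne_zero one_le_two f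
  norm_num [← Real.sqrt_eq_rpow] at h
  exact h

theorem norm_sqrt_smul_inclusionₗ_top_two_le (f : Lp E ∞ μ) :
    ‖(√(μ Set.univ).toReal • inclusionₗ (le_top : (2 : ℝ≥0∞) ≤ ∞)) f‖ ≤
      (μ Set.univ).toReal * ‖f‖ := by
  have h : ‖inclusionₗ (le_top : (2 : ℝ≥0∞) ≤ ∞) f‖ ≤ √(μ Set.univ).toReal * ‖f‖ := by
    simpa [Real.sqrt_eq_rpow] using norm_inclusionₗ_le two_ne_zero le_top f
  rw [LinearMap.smul_apply, norm_smul, Real.norm_of_nonneg (Real.sqrt_nonneg _)]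
  exact (mul_le_mul_of_nonneg_left h (Real.sqrt_nonneg _)).trans_eq
    (by rw [← mul_assoc, Real.mul_self_sqrt ENNReal.toReal_nonneg])

end MeasureTheory.Lp

namespace DyadicTreeIn

theorem transfer {E F G : Type*} [AddCommGroup E] [Module ℝ E] [NormedAddCommGroup F]
    [NormedSpace ℝ F] [NormedAddCommGroup G] [NormedSpace ℝ G] {T : E →ₗ[ℝ] F}
    (hT : Function.Injective T) (S : E →ₗ[ℝ] G) {D : Set E} {C : Set G} {ε δ : ℝ} {n : ℕ}
    (hSD : Set.MapsTo S D C)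
    (hsep : ∀ a ∈ D, ∀ b ∈ D, ε ≤ ‖T a - T b‖ → δ ≤ ‖S a - S b‖)
    (htree : DyadicTreeIn (T '' D) ε n) : DyadicTreeIn C δ n := by
  obtain ⟨x, hmem, hrel⟩ := htree
  have hlift : ∀ s : List Bool, ∃ g, s.length ≤ n → g ∈ D ∧ T g = x s := fun s => by
    by_cases hs : s.length ≤ n
    · obtain ⟨g, hg⟩ := hmem s hs; exact ⟨g, fun _ => hg⟩
    · exact ⟨0, fun h => absurd h hs⟩
  choose g hg using hlift
  refine ⟨fun s => S (g s), fun s hs => hSD (hg s hs).1, fun s hs => ?_⟩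
  have h0 := hg (s ++ [false]) (by simpa using hs)
  have h1 := hg (s ++ [true]) (by simpa using hs)
  obtain ⟨hmid, hε⟩ := hrel s hs
  refine ⟨?_, hsep _ h0.1 _ h1.1 (by rwa [h0.2, h1.2])⟩
  have : g s = (2 : ℝ)⁻¹ • (g (s ++ [false]) + g (s ++ [true])) :=
    hT (by rw [(hg s hs.le).2, hmid, map_smul, map_add, h0.2, h1.2])
  simp only [this, map_smul, map_add]

theorem sq_norm_midpoint_add_le_max {H : Type*} [NormedAddCommGroup H] [InnerProductSpace ℝ H]
    (a b : H) : ‖(2 : ℝ)⁻¹ • (a + b)‖ ^ 2 + ‖a - b‖ ^ 2 / 4 ≤ max (‖a‖ ^ 2) (‖b‖ ^ 2) := by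
  have hpar := parallelogram_law_with_norm ℝ a b
  rw [norm_smul, mul_pow, Real.norm_of_nonneg (by norm_num)]
  nlinarith [le_max_left (‖a‖ ^ 2) (‖b‖ ^ 2), le_max_right (‖a‖ ^ 2) (‖b‖ ^ 2)]

/-- Along the path which always moves to the child of larger norm, the squared norm grows by
at least `δ ^ 2 / 4` at each level. -/
theorem height_mul_sq_le {H : Type*} [NormedAddCommGroup H] [InnerProductSpace ℝ H] {R δ : ℝ}
    {n : ℕ} (hδ : 0 ≤ δ) (htree : DyadicTreeIn (Metric.closedBall (0 : H) R) δ n) :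
    n * δ ^ 2 ≤ 4 * R ^ 2 := by
  obtain ⟨x, hmem, hrel⟩ := htree
  have hpath : ∀ k ≤ n, ∃ s : List Bool, s.length = k ∧ k * δ ^ 2 ≤ 4 * ‖x s‖ ^ 2 := by
    intro k
    induction k with
    | zero => exact fun _ => ⟨[], rfl, by simp⟩
    | succ k ih =>
      intro hk
      obtain ⟨s, rfl, hs⟩ := ih (by omega)
      obtain ⟨hmid, hsep⟩ := hrel s hk
      have hgrow := sq_norm_midpoint_add_le_max (x (s ++ [false])) (x (s ++ [true]))
      rw [← hmid] at hgrow
      have hsep2 : δ ^ 2 ≤ ‖x (s ++ [false]) - x (s ++ [true])‖ ^ 2 := by gcongr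
      rcases le_max_iff.1 hgrow with h | h
      · exact ⟨s ++ [false], by simp, by push_cast; linarith⟩
      · exact ⟨s ++ [true], by simp, by push_cast; linarith⟩
  obtain ⟨s, hs, hsn⟩ := hpath n le_rfl
  have hR : ‖x s‖ ≤ R := mem_closedBall_zero_iff.1 (hmem s hs.le)
  nlinarith [norm_nonneg (x s)]

end DyadicTreeIn

section KotheInclusion

variable {Ω X : Type*} [MeasurableSpace Ω] {ν : Measure Ω} [NormedAddCommGroup X]
  [NormedSpace ℝ X] {j : X →L[ℝ] Lp ℝ 1 ν} {i : Lp ℝ ∞ ν →L[ℝ] X}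

theorem coeFn_map_map (hi : ∀ g : Lp ℝ ∞ ν, (j (i g) : Ω →ₘ[ν] ℝ) = (g : Ω →ₘ[ν] ℝ))
    (g : Lp ℝ ∞ ν) : ⇑(j (i g)) = ⇑g :=
  congrArg (fun f : Ω →ₘ[ν] ℝ => ⇑f) (hi g)

theorem injective_of_coe_map_map
    (hi : ∀ g : Lp ℝ ∞ ν, (j (i g) : Ω →ₘ[ν] ℝ) = (g : Ω →ₘ[ν] ℝ)) : Function.Injective i :=
  fun g g' h => Lp.ext (.of_eq (by rw [← coeFn_map_map hi, ← coeFn_map_map hi, h]))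

theorem abs_map_map_le [IsFiniteMeasure ν]
    (hi : ∀ g : Lp ℝ ∞ ν, (j (i g) : Ω →ₘ[ν] ℝ) = (g : Ω →ₘ[ν] ℝ))
    {g : Lp ℝ ∞ ν} {r : ℝ} (hg : ‖g‖ ≤ r) : |j (i g)| ≤ j (i (Lp.const ∞ ν r)) := by
  rw [← Lp.coeFn_le]
  filter_upwards [Lp.coeFn_abs (j (i g)), Lp.coeFn_const ∞ ν r, Lp.ae_norm_le_norm g]
    with ω habs hconst hnorm
  rw [habs, coeFn_map_map hi, coeFn_map_map hi, hconst]
  exact hnorm.trans hg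

theorem norm_map_map_le [IsFiniteMeasure ν]
    (hi : ∀ g : Lp ℝ ∞ ν, (j (i g) : Ω →ₘ[ν] ℝ) = (g : Ω →ₘ[ν] ℝ)) (g : Lp ℝ ∞ ν) :
    ‖j (i g)‖ ≤ ‖(√(ν Set.univ).toReal • Lp.inclusionₗ (le_top : (2 : ℝ≥0∞) ≤ ∞)) g‖ := by
  have : j (i g) = Lp.inclusionₗ one_le_two (Lp.inclusionₗ le_top g) := Subtype.ext (hi g)
  rw [this, LinearMap.smul_apply, norm_smul, Real.norm_of_nonneg (Real.sqrt_nonneg _)]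
  exact Lp.norm_inclusionₗ_two_one_le _

end KotheInclusion

theorem stmt16_general {Ω : Type*} [MeasurableSpace Ω] (ν : Measure Ω) [IsFiniteMeasure ν]
    {X : Type*} [NormedAddCommGroup X] [Lattice X] [IsOrderedAddMonoid X] [HasSolidNorm X] [NormedSpace ℝ X]
    (j : X →L[ℝ] Lp ℝ 1 ν) (hjinj : Function.Injective j)
    (hjlat : ∀ x y : X, j (x ⊔ y) = j x ⊔ j y)
    (hsolid : ∀ (f : Lp ℝ 1 ν) (x : X), |f| ≤ |j x| → ∃ z : X, j z = f ∧ ‖z‖ ≤ ‖x‖)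
    (horder : ∀ u : ℕ → X, Antitone u → IsGLB (Set.range u) 0 →
      Tendsto (fun n => ‖u n‖) atTop (𝓝 0))
    (i : Lp ℝ ⊤ ν →L[ℝ] X)
    (hi : ∀ g : Lp ℝ ⊤ ν, (j (i g) : Ω →ₘ[ν] ℝ) = (g : Ω →ₘ[ν] ℝ)) :
    SuperWeaklyCompactOperator i := by
  refine ⟨i.lipschitz.isBounded_image Metric.isBounded_closedBall, fun ε hε => ?_⟩
  obtain ⟨δ, hδ, hδε⟩ := exists_pos_le_norm_map_of_le_norm hjinj hjlat
    (fun f x h => (hsolid f x h).imp fun _ => And.left) horder (i (Lp.const ∞ ν 2)) hε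
  set M := (ν Set.univ).toReal
  -- scaling by `√M` turns the `L¹`-separation `δ` into an `L²`-separation `δ`
  set S : Lp ℝ ∞ ν →ₗ[ℝ] Lp ℝ 2 ν := √M • Lp.inclusionₗ le_top
  have hball : Set.MapsTo S (Metric.closedBall 0 1) (Metric.closedBall 0 M) := fun g hg =>
    mem_closedBall_zero_iff.2 ((Lp.norm_sqrt_smul_inclusionₗ_top_two_le g).trans
      (mul_le_of_le_one_right ENNReal.toReal_nonneg (mem_closedBall_zero_iff.1 hg)))
  have hsep : ∀ g ∈ Metric.closedBall 0 1, ∀ g' ∈ Metric.closedBall 0 1,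
      ε ≤ ‖i g - i g'‖ → δ ≤ ‖S g - S g'‖ := fun g hg g' hg' hgg' => by
    have hd : ‖g - g'‖ ≤ 2 := by
      simpa [one_add_one_eq_two] using norm_sub_le_of_le (mem_closedBall_zero_iff.1 hg)
        (mem_closedBall_zero_iff.1 hg')
    rw [← map_sub]
    exact (hδε _ (abs_map_map_le hi hd) (by rwa [map_sub])).trans (norm_map_map_le hi _)
  refine ⟨⌊4 * M ^ 2 / δ ^ 2⌋₊ + 1, fun htree => ?_⟩
  have hheight := (htree.transfer (injective_of_coe_map_map hi) S hball hsep).height_mul_sq_le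
    hδ.le
  have hlt := Nat.lt_floor_add_one (4 * M ^ 2 / δ ^ 2)
  rw [div_lt_iff₀ (by positivity)] at hlt
  push_cast at hheight
  linarith

/-- If `X` is a Köthe function space with order continuous norm over a finite measure
space `(Ω, Σ, ν)` (presented by a continuous injective lattice embedding `j : X → L¹(ν)`
with solid range containing `L∞(ν)`), then the inclusion operator `i : L∞(ν) → X` is
super weakly compact. -/
theorem stmt16 {Ω : Type*} [MeasurableSpace Ω] (ν : Measure Ω) [IsFiniteMeasure ν]
    {X : Type*} [NormedAddCommGroup X] [Lattice X] [IsOrderedAddMonoid X] [HasSolidNorm X] [NormedSpace ℝ X] [CompleteSpace X]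
    (j : X →L[ℝ] Lp ℝ 1 ν) (hjinj : Function.Injective j)
    (hjlat : ∀ x y : X, j (x ⊔ y) = j x ⊔ j y)
    (hsolid : ∀ (f : Lp ℝ 1 ν) (x : X), |f| ≤ |j x| → ∃ z : X, j z = f ∧ ‖z‖ ≤ ‖x‖)
    (horder : ∀ u : ℕ → X, Antitone u → IsGLB (Set.range u) 0 →
      Tendsto (fun n => ‖u n‖) atTop (𝓝 0))
    (i : Lp ℝ ⊤ ν →L[ℝ] X)
    (hi : ∀ g : Lp ℝ ⊤ ν, (j (i g) : Ω →ₘ[ν] ℝ) = (g : Ω →ₘ[ν] ℝ)) :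
    SuperWeaklyCompactOperator i :=
  stmt16_general ν j hjinj hjlat hsolid horder i hi
end
end
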